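/- arXiv:1803.00807 — 11 statements merged into one kernel-verified Lean document; each statement's English description precedes it below -/
import Mathlib

section
/- Let G = (V,E) be a finite simple graph, let L = (S,W) be an STC-labeling of G, and let C = (V1,V2) be a weak cut for G under L with cut-set E_C. Then the graph G' = (V, E \ E_C) admits an STC-labeling L' = (S',W') with |S'| = |S|. -/
/-- An STC-labeling of a simple graph `G`, given by its set `S` of strong edges
(the weak edges are `G.edgeSet \ S`): `S` consists of edges of `G` and there is no
pair of strong edges `{u,v}, {v,w}` with `{u,w}` not an edge of `G`. -/
def IsSTCLabeling {V : Type*} (G : SimpleGraph V) (S : Set (Sym2 V)) : Prop :=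
  S ⊆ G.edgeSet ∧ ∀ u v w : V, s(u, v) ∈ S → s(v, w) ∈ S → u ≠ w → G.Adj u w

/-- If `C = (V1, V2)` is a weak cut for `G` under the STC-labeling with strong
edges `S` (i.e. its cut-set `EC` consists of weak edges only), then the graph
obtained from `G` by deleting the cut-set admits an STC-labeling with the same
number of strong edges. -/
theorem weak_cut_delete {V : Type*} [Fintype V] (G : SimpleGraph V)
    (S : Set (Sym2 V)) (hSTC : IsSTCLabeling G S)
    (V1 V2 : Set V) (hunion : V1 ∪ V2 = Set.univ) (hdisj : Disjoint V1 V2)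
    (EC : Set (Sym2 V))
    (hEC : EC = {e ∈ G.edgeSet | ∃ u ∈ V1, ∃ v ∈ V2, e = s(u, v)})
    (hweak : EC ⊆ G.edgeSet \ S) :
    ∃ S' : Set (Sym2 V),
      IsSTCLabeling (G.deleteEdges EC) S' ∧ S'.ncard = S.ncard := by
  obtain ⟨hsub, hstc⟩ := hSTC
  have hSE : ∀ e ∈ S, e ∉ EC := fun e he hec => (hweak hec).2 he
  refine ⟨S, ⟨?_, ?_⟩, rfl⟩
  · intro e he
    rw [SimpleGraph.edgeSet_deleteEdges]
    exact ⟨hsub he, hSE e he⟩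
  · intro u v w huv hvw hne
    rw [SimpleGraph.deleteEdges_adj]
    refine ⟨hstc u v w huv hvw hne, ?_⟩
    intro hmem
    rw [hEC] at hmem
    obtain ⟨-, a, ha, b, hb, hab⟩ := hmem
    have hv : v ∈ V1 ∪ V2 := by rw [hunion]; trivial
    rcases Sym2.eq_iff.mp hab with ⟨hu, hw⟩ | ⟨hu, hw⟩
    · subst hu; subst hw
      rcases hv with hv1 | hv2
      · exact hSE _ hvw (by rw [hEC]; exact ⟨hsub hvw, v, hv1, w, hb, rfl⟩)
      · exact hSE _ huv (by rw [hEC]; exact ⟨hsub huv, u, ha, v, hv2, rfl⟩)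
    · subst hu; subst hw
      rcases hv with hv1 | hv2
      · exact hSE _ huv (by rw [hEC]; exact ⟨hsub huv, v, hv1, u, hb, Sym2.eq_swap⟩)
      · exact hSE _ hvw (by rw [hEC]; exact ⟨hsub hvw, w, ha, v, hv2, Sym2.eq_swap⟩)
end

section
/- If K1 and K2 are two distinct closed critical cliques of a finite simple graph G, then no vertex of K1 is adjacent to a vertex of K2 (equivalently, K1 and K2 are not adjacent in the critical clique graph of G). -/
/-- `K` is a clique all of whose vertices have the same neighbors outside of `K`. -/
def CliqueSameExtNbhd {V : Type*} (G : SimpleGraph V) (K : Set V) : Prop :=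
  G.IsClique K ∧ ∀ u ∈ K, ∀ v ∈ K, ∀ w ∉ K, (G.Adj u w ↔ G.Adj v w)

/-- A critical clique: a clique whose vertices all have the same neighbors outside,
maximal under this property. -/
def IsCriticalClique {V : Type*} (G : SimpleGraph V) (K : Set V) : Prop :=
  CliqueSameExtNbhd G K ∧
  ∀ K' : Set V, K ⊆ K' → CliqueSameExtNbhd G K' → K' = K

/-- `N(K)`: the set of vertices outside `K` adjacent to (the vertices of) `K`. -/
def cliqueNbhd {V : Type*} (G : SimpleGraph V) (K : Set V) : Set V :=
  {v | v ∉ K ∧ ∃ u ∈ K, G.Adj u v}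

/-- A closed critical clique: a critical clique `K` such that `N(K)` induces a clique. -/
def IsClosedCriticalClique {V : Type*} (G : SimpleGraph V) (K : Set V) : Prop :=
  IsCriticalClique G K ∧ G.IsClique (cliqueNbhd G K)

/-- Two distinct closed critical cliques have no edge between them. -/
theorem closed_critical_cliques_not_adjacent {V : Type*} [Fintype V]
    (G : SimpleGraph V) (K1 K2 : Set V)
    (h1 : IsClosedCriticalClique G K1) (h2 : IsClosedCriticalClique G K2)
    (hne : K1 ≠ K2) :
    ∀ u ∈ K1, ∀ v ∈ K2, ¬ G.Adj u v := by
  intro u hu v hv hadj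
  obtain ⟨⟨⟨hK1c, hK1n⟩, hK1max⟩, hN1⟩ := h1
  obtain ⟨⟨⟨hK2c, hK2n⟩, hK2max⟩, hN2⟩ := h2
  -- every vertex of K1 is adjacent to every distinct vertex of K2
  have star : ∀ x ∈ K1, ∀ y ∈ K2, x ≠ y → G.Adj x y := by
    intro x hx y hy hxy
    by_cases hx2 : x ∈ K2
    · exact hK2c hx2 hy hxy
    by_cases hy1 : y ∈ K1
    · exact hK1c hx hy1 hxy
    by_cases hv1 : v ∈ K1
    · have hxv : x ≠ v := by rintro rfl; exact hx2 hv
      have hxadjv : G.Adj x v := hK1c hx hv1 hxv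
      exact ((hK2n y hy v hv x hx2).mpr hxadjv.symm).symm
    · have hxadjv : G.Adj x v := (hK1n x hx u hu v hv1).mpr hadj
      by_cases hyv : y = v
      · exact hyv ▸ hxadjv
      · exact ((hK2n y hy v hv x hx2).mpr hxadjv.symm).symm
  -- u and v have the same neighbors outside K1 ∪ K2
  have bridge : ∀ w, w ∉ K1 → w ∉ K2 → (G.Adj u w ↔ G.Adj v w) := by
    intro w hw1 hw2
    constructor
    · intro huw
      by_cases hv1 : v ∈ K1
      · exact (hK1n u hu v hv1 w hw1).mp huw
      · have hvN : v ∈ cliqueNbhd G K1 := ⟨hv1, u, hu, hadj⟩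
        have hwN : w ∈ cliqueNbhd G K1 := ⟨hw1, u, hu, huw⟩
        have hvw : v ≠ w := by rintro rfl; exact hw2 hv
        exact hN1 hvN hwN hvw
    · intro hvw
      by_cases hu2 : u ∈ K2
      · exact (hK2n v hv u hu2 w hw2).mp hvw
      · have huN : u ∈ cliqueNbhd G K2 := ⟨hu2, v, hv, hadj.symm⟩
        have hwN : w ∈ cliqueNbhd G K2 := ⟨hw2, v, hv, hvw⟩
        have huw : u ≠ w := by rintro rfl; exact hw1 hu
        exact hN2 huN hwN huw
  have hunion : CliqueSameExtNbhd G (K1 ∪ K2) := by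
    constructor
    · intro x hx y hy hxy
      rcases hx with hx | hx <;> rcases hy with hy | hy
      · exact hK1c hx hy hxy
      · exact star x hx y hy hxy
      · exact (star y hy x hx (Ne.symm hxy)).symm
      · exact hK2c hx hy hxy
    · intro a ha b hb w hw
      have hw1 : w ∉ K1 := fun h => hw (Or.inl h)
      have hw2 : w ∉ K2 := fun h => hw (Or.inr h)
      have key : ∀ c ∈ K1 ∪ K2, (G.Adj c w ↔ G.Adj u w) := by
        intro c hc
        rcases hc with hc | hc
        · exact hK1n c hc u hu w hw1
        · exact (hK2n c hc v hv w hw2).trans (bridge w hw1 hw2).symm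
      exact (key a ha).trans (key b hb).symm
  have e1 := hK1max (K1 ∪ K2) Set.subset_union_left hunion
  have e2 := hK2max (K1 ∪ K2) Set.subset_union_right hunion
  exact hne (e1.symm.trans e2)
end

section
/- Let K be a closed critical clique of a finite simple graph G, let v ∈ N(K), and let L = (S,W) be an optimal STC-labeling of G. Then either every edge between v and K is strong under L, or every edge between v and K is weak under L. -/
/-- For a closed critical clique `K`, a vertex `v ∈ N(K)` and an optimal STC-labeling
(one maximizing the number of strong edges), either all edges between `v` and `K`
are strong, or all of them are weak. -/
theorem closed_critical_clique_all_or_nothing {V : Type*} [Fintype V]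
    (G : SimpleGraph V) (K : Set V) (hK : IsClosedCriticalClique G K)
    (v : V) (hv : v ∈ cliqueNbhd G K)
    (S : Set (Sym2 V)) (hS : IsSTCLabeling G S)
    (hopt : ∀ S' : Set (Sym2 V), IsSTCLabeling G S' → S'.ncard ≤ S.ncard) :
    (∀ u ∈ K, s(v, u) ∈ S) ∨ (∀ u ∈ K, s(v, u) ∉ S) := by
  by_contra hcon
  push_neg at hcon
  obtain ⟨⟨u1, hu1K, hu1⟩, u2, hu2K, hu2⟩ := hcon
  obtain ⟨hvK, u0, hu0K, hu0adj⟩ := hv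
  have hKclique : G.IsClique K := hK.1.1.1
  have hsame := hK.1.1.2
  have hNcl : G.IsClique (cliqueNbhd G K) := hK.2
  have hvadj : ∀ x ∈ K, G.Adj x v := fun x hx =>
    (hsame x hx u0 hu0K v hvK).mpr hu0adj
  have hu1v : u1 ≠ v := by rintro rfl; exact hvK hu1K
  have hvmem : v ∈ cliqueNbhd G K := ⟨hvK, u0, hu0K, hu0adj⟩
  have hne12 : u1 ≠ u2 := by rintro rfl; exact hu1 hu2
  have H1 : ∀ c, c ≠ v → s(u1, c) ∈ S → G.Adj v c := by
    intro c hcv hcS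
    have hadj : G.Adj u1 c := hS.1 hcS
    by_cases hcK : c ∈ K
    · exact (hvadj c hcK).symm
    · exact hNcl hvmem ⟨hcK, u1, hu1K, hadj⟩ (Ne.symm hcv)
  have H2 : ∀ c, c ≠ u1 → s(v, c) ∈ S → G.Adj u1 c := by
    intro c hcu hcS
    by_cases hc2 : c = u2
    · subst hc2; exact hKclique hu1K hu2K hne12
    · have hadj2 : G.Adj c u2 := hS.2 c v u2 (by rwa [Sym2.eq_swap]) hu2 hc2
      by_cases hcK : c ∈ K
      · exact hKclique hu1K hcK (Ne.symm hcu)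
      · exact (hsame u1 hu1K u2 hu2K c hcK).mpr hadj2.symm
  have hS' : IsSTCLabeling G (insert (s(v, u1)) S) := by
    constructor
    · intro e he
      rcases Set.mem_insert_iff.mp he with rfl | he
      · exact (hvadj u1 hu1K).symm
      · exact hS.1 he
    · intro a b c hab hbc hac
      rcases Set.mem_insert_iff.mp hab with h1 | h1
      · rcases Sym2.eq_iff.mp h1 with ⟨rfl, rfl⟩ | ⟨rfl, rfl⟩
        · rcases Set.mem_insert_iff.mp hbc with h2 | h2
          · rcases Sym2.eq_iff.mp h2 with ⟨h3, h4⟩ | ⟨h3, h4⟩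
            · exact absurd h3 hu1v
            · exact absurd h4.symm hac
          · exact H1 c (Ne.symm hac) h2
        · rcases Set.mem_insert_iff.mp hbc with h2 | h2
          · rcases Sym2.eq_iff.mp h2 with ⟨h3, h4⟩ | ⟨h3, h4⟩
            · exact absurd h4.symm hac
            · exact absurd h3.symm hu1v
          · exact H2 c (Ne.symm hac) h2
      · rcases Set.mem_insert_iff.mp hbc with h2 | h2
        · rcases Sym2.eq_iff.mp h2 with ⟨rfl, rfl⟩ | ⟨rfl, rfl⟩
          · exact (H2 a hac (by rwa [Sym2.eq_swap] at h1)).symm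
          · exact (H1 a hac (by rwa [Sym2.eq_swap] at h1)).symm
        · exact hS.2 a b c h1 h2 hac
  have hle := hopt _ hS'
  rw [Set.ncard_insert_of_notMem hu1 (Set.toFinite S)] at hle
  omega
end

section
/- Let K be a closed critical clique of a finite simple graph G = (V,E) with |K| > |E(N(K), N²(K))|, where E(N(K), N²(K)) is the set of edges of G with one endpoint in N(K) and one endpoint in N²(K), and let G' be the induced subgraph of G on V \ (K ∪ N(K)). Then G has an STC-labeling with at most k weak edges if and only if G' has an STC-labeling with at most k − |E(N(K), N²(K))| weak edges. -/
/-- `N²(K)`: the set of vertices at distance exactly two from `K`. -/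
def cliqueNbhd2 {V : Type*} (G : SimpleGraph V) (K : Set V) : Set V :=
  {v | v ∉ K ∧ v ∉ cliqueNbhd G K ∧ ∃ u ∈ cliqueNbhd G K, G.Adj u v}

/-- The set of edges of `G` with one endpoint in `A` and one endpoint in `B`. -/
def edgesBetween {V : Type*} (G : SimpleGraph V) (A B : Set V) : Set (Sym2 V) :=
  {e | e ∈ G.edgeSet ∧ ∃ u ∈ A, ∃ v ∈ B, e = s(u, v)}

/-- Safeness of the kernelization rule: for a closed critical clique `K` with
`|K| > |E(N(K), N²(K))|`, the graph `G` has an STC-labeling with at most `k` weak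
edges iff the induced subgraph on `V \ (K ∪ N(K))` has an STC-labeling with at most
`k - |E(N(K), N²(K))|` weak edges. -/
theorem closed_critical_clique_reduction {V : Type*} [Fintype V]
    (G : SimpleGraph V) (K : Set V) (hK : IsClosedCriticalClique G K)
    (hbig : (edgesBetween G (cliqueNbhd G K) (cliqueNbhd2 G K)).ncard < K.ncard)
    (k : ℕ) :
    (∃ S : Set (Sym2 V), IsSTCLabeling G S ∧ (G.edgeSet \ S).ncard ≤ k) ↔
    (∃ S' : Set (Sym2 ((K ∪ cliqueNbhd G K)ᶜ : Set V)),
      IsSTCLabeling (G.induce (K ∪ cliqueNbhd G K)ᶜ) S' ∧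
      (((G.induce (K ∪ cliqueNbhd G K)ᶜ).edgeSet \ S').ncard : ℤ) ≤
        (k : ℤ) - ((edgesBetween G (cliqueNbhd G K) (cliqueNbhd2 G K)).ncard : ℤ)) := by
  classical
  set N := cliqueNbhd G K with hNdef
  set N2 := cliqueNbhd2 G K with hN2def
  set A : Set V := (K ∪ N)ᶜ with hAdef
  set EB := edgesBetween G N N2 with hEBdef
  set m := EB.ncard with hmdef
  set f : Sym2 (A : Set V) → Sym2 V := Sym2.map (fun a => (a : V)) with hfdef
  have hfinj : Function.Injective f := Sym2.map.injective Subtype.coe_injective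
  -- basic facts
  have hadjKN : ∀ u ∈ K, ∀ v ∈ N, G.Adj u v := by
    intro u hu v hv
    obtain ⟨hvK, u', hu', hadj⟩ := hv
    exact ((hK.1.1.2 u' hu' u hu v hvK).mp hadj)
  have hcliqueKN : G.IsClique (K ∪ N) := by
    intro x hx y hy hxy
    rcases hx with hx | hx
    · rcases hy with hy | hy
      · exact hK.1.1.1 hx hy hxy
      · exact hadjKN x hx y hy
    · rcases hy with hy | hy
      · exact (hadjKN y hy x hx).symm
      · exact hK.2 hx hy hxy
  have hnadjKN2 : ∀ u ∈ K, ∀ w ∈ N2, ¬ G.Adj u w := by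
    intro u hu w hw hadj
    exact hw.2.1 ⟨hw.1, u, hu, hadj⟩
  -- membership of f-images
  have hfmem : ∀ (e' : Sym2 A) (x : V), x ∈ f e' → x ∈ A := by
    intro e' x hx
    induction e' using Sym2.inductionOn with
    | hf a b =>
      rw [hfdef, Sym2.map_pair_eq, Sym2.mem_iff] at hx
      rcases hx with h | h
      · exact h ▸ a.2
      · exact h ▸ b.2
  have hfedge : ∀ e' ∈ (G.induce A).edgeSet, f e' ∈ G.edgeSet := by
    intro e' he'
    induction e' using Sym2.inductionOn with
    | hf a b =>
      rw [SimpleGraph.mem_edgeSet] at he'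
      rw [hfdef, Sym2.map_pair_eq, SimpleGraph.mem_edgeSet]
      exact he'
  constructor
  · -- forward direction
    rintro ⟨S, hS, hcount⟩
    refine ⟨{e | e ∈ (G.induce A).edgeSet ∧ f e ∈ S}, ⟨fun e he => he.1, ?_⟩, ?_⟩
    · intro u v w huv hvw huw
      have h1 : s((u : V), (v : V)) ∈ S := by
        have := huv.2; rwa [hfdef, Sym2.map_pair_eq] at this
      have h2 : s((v : V), (w : V)) ∈ S := by
        have := hvw.2; rwa [hfdef, Sym2.map_pair_eq] at this
      have : G.Adj u w := hS.2 u v w h1 h2 (fun h => huw (Subtype.coe_injective h))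
      exact this
    · -- counting
      set S' : Set (Sym2 A) := {e | e ∈ (G.induce A).edgeSet ∧ f e ∈ S} with hS'def
      set W' := (G.induce A).edgeSet \ S' with hW'def
      have hWimg : f '' W' ⊆ (G.edgeSet \ S) := by
        rintro e ⟨e', ⟨he'1, he'2⟩, rfl⟩
        refine ⟨hfedge e' he'1, ?_⟩
        intro hfS
        exact he'2 ⟨he'1, hfS⟩
      have hWimgA : ∀ e ∈ f '' W', ∀ x ∈ e, x ∈ A := by
        rintro e ⟨e', _, rfl⟩ x hx
        exact hfmem e' x hx
      set Wout := (G.edgeSet \ S) \ {e | ∀ x ∈ e, x ∈ A} with hWoutdef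
      have hmWout : m ≤ Wout.ncard := by
        by_cases hcase : EB ⊆ G.edgeSet \ S
        · -- all N-N2 edges weak
          have hsub : EB ⊆ Wout := by
            intro e he
            refine ⟨hcase he, ?_⟩
            intro hall
            obtain ⟨_, v, hv, w, hw, rfl⟩ := he
            have : v ∈ A := hall v (by rw [Sym2.mem_iff]; left; rfl)
            exact this (Or.inr hv)
          exact Set.ncard_le_ncard hsub (Set.toFinite _)
        · -- some N-N2 edge strong: all K-v edges weak
          rw [Set.not_subset] at hcase
          obtain ⟨e0, he0EB, he0⟩ := hcase
          obtain ⟨he0E, v, hv, w, hw, rfl⟩ := he0EB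
          have he0S : s(v, w) ∈ S := by
            by_contra h
            exact he0 ⟨he0E, h⟩
          have hsub : (fun u => s(u, v)) '' K ⊆ Wout := by
            rintro e ⟨u, hu, rfl⟩
            have hadj : G.Adj u v := hadjKN u hu v hv
            refine ⟨⟨hadj, ?_⟩, ?_⟩
            · intro huvS
              have huw : u ≠ w := fun h => hw.1 (h ▸ hu)
              exact hnadjKN2 u hu w hw (hS.2 u v w huvS he0S huw)
            · intro hall
              have : u ∈ A := hall u (by rw [Sym2.mem_iff]; left; rfl)
              exact this (Or.inl hu)
          have hinj : Set.InjOn (fun u => s(u, v)) K := by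
            intro a ha b hb hab
            simp only [Sym2.eq_iff] at hab
            rcases hab with ⟨h, _⟩ | ⟨h1, h2⟩
            · exact h
            · exact absurd (h1 ▸ ha) hv.1
          calc m ≤ K.ncard := le_of_lt hbig
            _ = ((fun u => s(u, v)) '' K).ncard := (Set.ncard_image_of_injOn hinj).symm
            _ ≤ Wout.ncard := Set.ncard_le_ncard hsub (Set.toFinite _)
      have hdisj : Disjoint (f '' W') Wout := by
        rw [Set.disjoint_left]
        intro e he heout
        exact heout.2 (hWimgA e he)
      have hsum : (f '' W').ncard + Wout.ncard ≤ (G.edgeSet \ S).ncard := by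
        rw [← Set.ncard_union_eq hdisj (Set.toFinite _) (Set.toFinite _)]
        exact Set.ncard_le_ncard (Set.union_subset hWimg Set.diff_subset) (Set.toFinite _)
      have himgcard : (f '' W').ncard = W'.ncard := Set.ncard_image_of_injective _ hfinj
      have : W'.ncard + m ≤ k := by
        calc W'.ncard + m ≤ (f '' W').ncard + Wout.ncard := by
              rw [himgcard]; exact Nat.add_le_add le_rfl hmWout
          _ ≤ (G.edgeSet \ S).ncard := hsum
          _ ≤ k := hcount
      have := this
      push_cast
      omega
  · -- backward direction
    rintro ⟨S', hS', hcount⟩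
    set W' := (G.induce A).edgeSet \ S' with hW'def
    refine ⟨{e ∈ G.edgeSet | ∀ x ∈ e, x ∈ K ∪ N} ∪ f '' S', ⟨?_, ?_⟩, ?_⟩
    · rintro e (he | ⟨e', he', rfl⟩)
      · exact he.1
      · exact hfedge e' (hS'.1 he')
    · intro u v w huv hvw huw
      -- extraction helper
      have hextract : ∀ (x y : V), s(x, y) ∈ f '' S' →
          ∃ (a b : A), (a : V) = x ∧ (b : V) = y ∧ s(a, b) ∈ S' := by
        rintro x y ⟨e', he', heq⟩
        induction e' using Sym2.inductionOn with
        | hf a b =>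
          rw [hfdef, Sym2.map_pair_eq, Sym2.eq_iff] at heq
          rcases heq with ⟨h1, h2⟩ | ⟨h1, h2⟩
          · exact ⟨a, b, h1, h2, he'⟩
          · exact ⟨b, a, h2, h1, by rwa [Sym2.eq_swap]⟩
      rcases huv with huv | huv
      · rcases hvw with hvw | hvw
        · -- both in the clique K ∪ N
          have hu : u ∈ K ∪ N := huv.2 u (by rw [Sym2.mem_iff]; left; rfl)
          have hw : w ∈ K ∪ N := hvw.2 w (by rw [Sym2.mem_iff]; right; rfl)
          exact hcliqueKN hu hw huw
        · -- mixed : contradiction on v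
          have hv : v ∈ K ∪ N := huv.2 v (by rw [Sym2.mem_iff]; right; rfl)
          obtain ⟨c, d, hc, hd, _⟩ := hextract v w hvw
          exact absurd hv (hc ▸ c.2)
      · rcases hvw with hvw | hvw
        · -- mixed
          have hv : v ∈ K ∪ N := hvw.2 v (by rw [Sym2.mem_iff]; left; rfl)
          obtain ⟨a, b, ha, hb, _⟩ := hextract u v huv
          exact absurd hv (hb ▸ b.2)
        · -- both lifted from S'
          obtain ⟨a, b, ha, hb, hab⟩ := hextract u v huv
          obtain ⟨c, d, hc, hd, hcd⟩ := hextract v w hvw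
          have hbc : b = c := Subtype.coe_injective (hb.trans hc.symm)
          have had : a ≠ d := fun h => huw (ha ▸ hd ▸ h ▸ rfl)
          have := hS'.2 a b d hab (hbc ▸ hcd) had
          have : G.Adj (a : V) (d : V) := this
          rwa [ha, hd] at this
    · -- counting
      set S : Set (Sym2 V) := {e ∈ G.edgeSet | ∀ x ∈ e, x ∈ K ∪ N} ∪ f '' S' with hSdef
      have hsub : G.edgeSet \ S ⊆ EB ∪ f '' W' := by
        intro e he
        induction e using Sym2.inductionOn with
        | hf a b =>
          obtain ⟨heE, heS⟩ := he
          have hadj : G.Adj a b := heE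
          have hmix : ∀ (x y : V), G.Adj x y → x ∈ K ∪ N → y ∈ A → s(x, y) ∈ EB := by
            intro x y hxy hx hy
            have hyK : y ∉ K := fun h => hy (Or.inl h)
            have hyN : y ∉ N := fun h => hy (Or.inr h)
            rcases hx with hx | hx
            · exact absurd ⟨hyK, x, hx, hxy⟩ hyN
            · exact ⟨hxy, x, hx, y, ⟨hyK, hyN, x, hx, hxy⟩, rfl⟩
          by_cases haKN : a ∈ K ∪ N
          · by_cases hbKN : b ∈ K ∪ N
            · exfalso
              apply heS
              left
              refine ⟨heE, ?_⟩
              intro x hx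
              rw [Sym2.mem_iff] at hx
              rcases hx with rfl | rfl
              · exact haKN
              · exact hbKN
            · exact Or.inl (hmix a b hadj haKN hbKN)
          · by_cases hbKN : b ∈ K ∪ N
            · have : s(b, a) ∈ EB := hmix b a hadj.symm hbKN haKN
              rw [Sym2.eq_swap] at this
              exact Or.inl this
            · -- both in A
              right
              have he' : (G.induce A).Adj ⟨a, haKN⟩ ⟨b, hbKN⟩ := hadj
              have hfe : f s((⟨a, haKN⟩ : A), (⟨b, hbKN⟩ : A)) = s(a, b) := by
                rw [hfdef, Sym2.map_pair_eq]
              refine ⟨s((⟨a, haKN⟩ : A), (⟨b, hbKN⟩ : A)), ⟨he', ?_⟩, hfe⟩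
              intro hin
              exact heS (Or.inr ⟨_, hin, hfe⟩)
      have hle : (G.edgeSet \ S).ncard ≤ m + W'.ncard := by
        calc (G.edgeSet \ S).ncard ≤ (EB ∪ f '' W').ncard :=
              Set.ncard_le_ncard hsub (Set.toFinite _)
          _ ≤ EB.ncard + (f '' W').ncard := Set.ncard_union_le _ _
          _ = m + W'.ncard := by rw [Set.ncard_image_of_injective _ hfinj]
      have hW'k : (W'.ncard : ℤ) ≤ (k : ℤ) - (m : ℤ) := hcount
      omega
end

section
/- Let G = (V,E) be a finite simple graph in which every closed critical clique K satisfies |K| ≤ |E(N(K), N²(K))|, where E(N(K), N²(K)) is the set of edges of G with one endpoint in N(K) and one endpoint in N²(K). If G admits an STC-labeling with at most k weak edges, then |V| ≤ 4k. -/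
namespace STCAux

variable {V : Type*}

/-- closed neighborhood -/
def cn (G : SimpleGraph V) (v : V) : Set V := insert v {u | G.Adj v u}

/-- class of equal closed neighborhood -/
def Cc (G : SimpleGraph V) (v : V) : Set V := {u | cn G u = cn G v}

lemma mem_cn {G : SimpleGraph V} {v w : V} : w ∈ cn G v ↔ w = v ∨ G.Adj v w := by
  simp [cn]

lemma mem_Cc {G : SimpleGraph V} {v u : V} : u ∈ Cc G v ↔ cn G u = cn G v := Iff.rfl

lemma self_mem_Cc (G : SimpleGraph V) (v : V) : v ∈ Cc G v := rfl

lemma Cc_clique (G : SimpleGraph V) (v : V) : G.IsClique (Cc G v) := by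
  intro u hu u' hu' hne
  have h : u' ∈ cn G u := by
    rw [mem_Cc] at hu hu'
    rw [hu, ← hu']
    exact mem_cn.2 (Or.inl rfl)
  exact (mem_cn.1 h).resolve_left (Ne.symm hne)

lemma Cc_sameExt (G : SimpleGraph V) (v : V) {u u' w : V} (hu : u ∈ Cc G v)
    (hu' : u' ∈ Cc G v) (hw : w ∉ Cc G v) : G.Adj u w ↔ G.Adj u' w := by
  have hwu : w ≠ u := fun h => hw (h ▸ hu)
  have hwu' : w ≠ u' := fun h => hw (h ▸ hu')
  rw [mem_Cc] at hu hu'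
  constructor
  · intro h
    have : w ∈ cn G u' := by rw [hu', ← hu]; exact mem_cn.2 (Or.inr h)
    exact (mem_cn.1 this).resolve_left hwu'
  · intro h
    have : w ∈ cn G u := by rw [hu, ← hu']; exact mem_cn.2 (Or.inr h)
    exact (mem_cn.1 this).resolve_left hwu

lemma Cc_critical (G : SimpleGraph V) (v : V) : IsCriticalClique G (Cc G v) := by
  refine ⟨⟨Cc_clique G v, fun u hu u' hu' w hw => Cc_sameExt G v hu hu' hw⟩, ?_⟩
  rintro K' hsub ⟨hcl, hext⟩
  have hv : v ∈ K' := hsub (self_mem_Cc G v)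
  ext u
  refine ⟨fun hu => ?_, fun hu => hsub hu⟩
  rw [mem_Cc]
  by_cases huv : u = v
  · rw [huv]
  have hadj : G.Adj u v := hcl hu hv huv
  ext w
  rw [mem_cn, mem_cn]
  by_cases hw : w ∈ K'
  · constructor
    · rintro -
      by_cases h : w = v
      · exact Or.inl h
      · exact Or.inr ((hcl hv hw (Ne.symm h)))
    · rintro -
      by_cases h : w = u
      · exact Or.inl h
      · exact Or.inr ((hcl hu hw (Ne.symm h)))
  · have hwu : w ≠ u := fun h => hw (h ▸ hu)
    have hwv : w ≠ v := fun h => hw (h ▸ hv)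
    constructor
    · rintro (rfl | h)
      · exact absurd hu hw
      · exact Or.inr ((hext u hu v hv w hw).1 h)
    · rintro (rfl | h)
      · exact absurd hv hw
      · exact Or.inr ((hext u hu v hv w hw).2 h)

lemma adj_of_mem_cliqueNbhd {G : SimpleGraph V} {v x : V}
    (hx : x ∈ cliqueNbhd G (Cc G v)) : G.Adj v x := by
  obtain ⟨hxn, u, hu, hadj⟩ := hx
  have : x ∈ cn G u := mem_cn.2 (Or.inr hadj)
  rw [mem_Cc] at hu
  rw [hu] at this
  refine (mem_cn.1 this).resolve_left fun h => hxn (h ▸ self_mem_Cc G v)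

/-- a representative pair for a Sym2 element -/
lemma sym2_exists (e : Sym2 V) : ∃ p : V × V, s(p.1, p.2) = e := by
  induction e using Sym2.ind with | _ x y => exact ⟨(x, y), rfl⟩

noncomputable def sRep (e : Sym2 V) : V × V := (sym2_exists e).choose

lemma sRep_spec (e : Sym2 V) : s((sRep e).1, (sRep e).2) = e := (sym2_exists e).choose_spec

lemma mem_sRep {x : V} {e : Sym2 V} (h : x ∈ e) : x = (sRep e).1 ∨ x = (sRep e).2 := by
  rw [← sRep_spec e, Sym2.mem_iff] at h
  exact h

lemma ncard_pairs_le [Fintype V] (W : Set (Sym2 V)) :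
    {p : Sym2 V × V | p.1 ∈ W ∧ p.2 ∈ p.1}.ncard ≤ 2 * W.ncard := by
  have hsub : {p : Sym2 V × V | p.1 ∈ W ∧ p.2 ∈ p.1} ⊆
      (fun e => (e, (sRep e).1)) '' W ∪ (fun e => (e, (sRep e).2)) '' W := by
    rintro ⟨e, x⟩ ⟨he, hx⟩
    rcases mem_sRep hx with h | h
    · exact Or.inl ⟨e, he, by dsimp only; rw [← h]⟩
    · exact Or.inr ⟨e, he, by dsimp only; rw [← h]⟩
  calc {p : Sym2 V × V | p.1 ∈ W ∧ p.2 ∈ p.1}.ncard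
      ≤ ((fun e => (e, (sRep e).1)) '' W ∪ (fun e => (e, (sRep e).2)) '' W).ncard :=
        Set.ncard_le_ncard hsub (Set.toFinite _)
    _ ≤ ((fun e => (e, (sRep e).1)) '' W).ncard + ((fun e => (e, (sRep e).2)) '' W).ncard :=
        Set.ncard_union_le _ _
    _ ≤ W.ncard + W.ncard := Nat.add_le_add (Set.ncard_image_le (Set.toFinite _))
        (Set.ncard_image_le (Set.toFinite _))
    _ = 2 * W.ncard := (two_mul _).symm

lemma ncard_le_of_injOn {α β : Type*} {s : Set α} {t : Set β} (f : α → β)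
    (hmap : Set.MapsTo f s t) (hinj : Set.InjOn f s) (hs : s.Finite) (ht : t.Finite) :
    s.ncard ≤ t.ncard := by
  rw [← Nat.cast_le (α := ℕ∞), hs.cast_ncard_eq, ht.cast_ncard_eq]
  exact Set.encard_le_encard_of_injOn hmap hinj

lemma exists_injOn {α β : Type*} [Nonempty β] {s : Set α} {t : Set β}
    (h : s.ncard ≤ t.ncard) (hs : s.Finite) (ht : t.Finite) :
    ∃ f : α → β, Set.MapsTo f s t ∧ Set.InjOn f s := by
  have hen : s.encard ≤ t.encard := by
    rw [← hs.cast_ncard_eq, ← ht.cast_ncard_eq]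
    exact_mod_cast h
  obtain ⟨f, hf, hinj⟩ := hs.exists_injOn_of_encard_le hen
  exact ⟨f, fun a ha => hf ha, hinj⟩

end STCAux

open STCAux

/-- A graph reduced with respect to the kernelization rule (every closed critical
clique `K` satisfies `|K| ≤ |E(N(K), N²(K))|`) that admits an STC-labeling with at
most `k` weak edges has at most `4k` vertices. -/
theorem stc_4k_vertex_kernel {V : Type*} [Fintype V] (G : SimpleGraph V)
    (hred : ∀ K : Set V, IsClosedCriticalClique G K →
      K.ncard ≤ (edgesBetween G (cliqueNbhd G K) (cliqueNbhd2 G K)).ncard)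
    (k : ℕ) (S : Set (Sym2 V)) (hS : IsSTCLabeling G S)
    (hweak : (G.edgeSet \ S).ncard ≤ k) :
    Fintype.card V ≤ 4 * k := by
  classical
  rcases isEmpty_or_nonempty V with hV | hV
  · simp [Fintype.card_eq_zero]
  obtain ⟨v0⟩ := hV
  set W : Set (Sym2 V) := G.edgeSet \ S with hWdef
  set A : Set V := {v | ∃ e ∈ W, v ∈ e} with hA
  set B : Set V := Aᶜ with hB
  have hstrong : ∀ v ∈ B, ∀ x, G.Adj v x → s(v, x) ∈ S := by
    intro v hv x hadj
    by_contra h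
    rw [hB, Set.mem_compl_iff, hA, Set.mem_setOf_eq] at hv
    exact hv ⟨s(v, x), ⟨G.mem_edgeSet.2 hadj, h⟩, Sym2.mem_mk_left v x⟩
  have hP3 : ∀ v ∈ B, ∀ x y, x ≠ y → G.Adj v x → G.Adj v y → G.Adj x y := by
    intro v hv x y hxy hx hy
    exact hS.2 x v y (by rw [Sym2.eq_swap]; exact hstrong v hv x hx)
      (hstrong v hv y hy) hxy
  have hcnB : ∀ v ∈ B, ∀ v' ∈ B, G.Adj v v' → cn G v = cn G v' := by
    intro v hv v' hv' hadj
    ext w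
    rw [mem_cn, mem_cn]
    constructor
    · rintro (rfl | h)
      · exact Or.inr hadj.symm
      · by_cases hwv' : w = v'
        · exact Or.inl hwv'
        · exact Or.inr (hP3 v hv v' w (fun hh => hwv' hh.symm) hadj h)
    · rintro (rfl | h)
      · exact Or.inr hadj
      · by_cases hwv : w = v
        · exact Or.inl hwv
        · exact Or.inr (hP3 v' hv' v w (fun hh => hwv hh.symm) hadj.symm h)
  have hkey : ∀ v ∈ B, ∀ v' ∈ B, ∀ x, x ∈ cliqueNbhd G (Cc G v) →
      x ∈ cliqueNbhd G (Cc G v') → Cc G v = Cc G v' := by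
    intro v hv v' hv' x hx hx'
    by_cases hvv' : v = v'
    · rw [hvv']
    have hax : G.Adj v x := adj_of_mem_cliqueNbhd hx
    have hax' : G.Adj v' x := adj_of_mem_cliqueNbhd hx'
    have hadj : G.Adj v v' := hS.2 v x v' (hstrong v hv x hax)
      (by rw [Sym2.eq_swap]; exact hstrong v' hv' x hax') hvv'
    have hcc := hcnB v hv v' hv' hadj
    ext u
    rw [mem_Cc, mem_Cc, hcc]
  have hclosed : ∀ v ∈ B, IsClosedCriticalClique G (Cc G v) := by
    intro v hv
    refine ⟨Cc_critical G v, ?_⟩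
    intro x hx y hy hxy
    exact hP3 v hv x y hxy (adj_of_mem_cliqueNbhd hx) (adj_of_mem_cliqueNbhd hy)
  have hweakE : ∀ v ∈ B,
      edgesBetween G (cliqueNbhd G (Cc G v)) (cliqueNbhd2 G (Cc G v)) ⊆ W := by
    rintro v hv e ⟨he, x, hx, y, hy, rfl⟩
    refine ⟨he, fun hs => ?_⟩
    have hvy : v ≠ y := fun h => hy.1 (h ▸ self_mem_Cc G v)
    have hadj : G.Adj v y := hS.2 v x y (hstrong v hv x (adj_of_mem_cliqueNbhd hx)) hs hvy
    exact hy.2.1 ⟨hy.1, v, self_mem_Cc G v, hadj⟩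
  have _inst : Nonempty (Sym2 V) := ⟨s(v0, v0)⟩
  have hFex : ∀ K : Set V, ∃ f : V → Sym2 V,
      (∃ v ∈ B, K = Cc G v) →
      Set.InjOn f K ∧ Set.MapsTo f K (edgesBetween G (cliqueNbhd G K) (cliqueNbhd2 G K)) := by
    intro K
    by_cases h : ∃ v ∈ B, K = Cc G v
    · obtain ⟨v, hv, rfl⟩ := h
      have hle := hred (Cc G v) (hclosed v hv)
      obtain ⟨f, hmap, hinj⟩ := exists_injOn hle (Set.toFinite _) (Set.toFinite _)
      exact ⟨f, fun _ => ⟨hinj, hmap⟩⟩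
    · exact ⟨fun _ => s(v0, v0), fun hc => absurd hc h⟩
  choose F hF using hFex
  have hpickex : ∀ (K : Set V) (e : Sym2 V), ∃ x : V,
      e ∈ edgesBetween G (cliqueNbhd G K) (cliqueNbhd2 G K) →
      x ∈ cliqueNbhd G K ∧ ∃ y ∈ cliqueNbhd2 G K, e = s(x, y) := by
    intro K e
    by_cases h : e ∈ edgesBetween G (cliqueNbhd G K) (cliqueNbhd2 G K)
    · obtain ⟨-, x, hx, y, hy, rfl⟩ := h
      exact ⟨x, fun _ => ⟨hx, y, hy, rfl⟩⟩
    · exact ⟨v0, fun hc => absurd hc h⟩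
  choose pk hpk using hpickex
  have hgmem : ∀ v ∈ B, F (Cc G v) v ∈
      edgesBetween G (cliqueNbhd G (Cc G v)) (cliqueNbhd2 G (Cc G v)) :=
    fun v hv => (hF (Cc G v) ⟨v, hv, rfl⟩).2 (self_mem_Cc G v)
  have hgmap : Set.MapsTo (fun v => (F (Cc G v) v, pk (Cc G v) (F (Cc G v) v))) B
      {p : Sym2 V × V | p.1 ∈ W ∧ p.2 ∈ p.1} := by
    intro v hv
    have hmem := hgmem v hv
    obtain ⟨hx, y, hy, hey⟩ := hpk (Cc G v) (F (Cc G v) v) hmem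
    refine ⟨hweakE v hv hmem, ?_⟩
    show pk (Cc G v) (F (Cc G v) v) ∈ F (Cc G v) v
    have hm : pk (Cc G v) (F (Cc G v) v) ∈ s(pk (Cc G v) (F (Cc G v) v), y) :=
      Sym2.mem_mk_left _ _
    rwa [← hey] at hm
  have hginj : Set.InjOn (fun v => (F (Cc G v) v, pk (Cc G v) (F (Cc G v) v))) B := by
    intro v hv v' hv' heq
    have h1 : F (Cc G v) v = F (Cc G v') v' := congrArg Prod.fst heq
    by_cases hK : Cc G v = Cc G v'
    · have hv'mem : v' ∈ Cc G v := by rw [hK]; exact self_mem_Cc G v'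
      refine (hF (Cc G v) ⟨v, hv, rfl⟩).1 (self_mem_Cc G v) hv'mem ?_
      rw [h1, hK]
    · exfalso
      have hmem := hgmem v hv
      have hmem' := hgmem v' hv'
      have hmem2 : F (Cc G v) v ∈
          edgesBetween G (cliqueNbhd G (Cc G v')) (cliqueNbhd2 G (Cc G v')) := by
        rw [h1]; exact hmem'
      obtain ⟨hx, -⟩ := hpk (Cc G v) (F (Cc G v) v) hmem
      obtain ⟨hx', -⟩ := hpk (Cc G v') (F (Cc G v) v) hmem2
      have h2 : pk (Cc G v) (F (Cc G v) v) = pk (Cc G v') (F (Cc G v') v') :=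
        congrArg Prod.snd heq
      rw [← h1] at h2
      rw [h2] at hx
      exact hK (hkey v hv v' hv' _ hx hx')
  have hBcard : B.ncard ≤ 2 * W.ncard :=
    le_trans (ncard_le_of_injOn _ hgmap hginj (Set.toFinite _) (Set.toFinite _))
      (ncard_pairs_le W)
  have hAex : ∀ v : V, ∃ e : Sym2 V, v ∈ A → e ∈ W ∧ v ∈ e := by
    intro v
    by_cases h : v ∈ A
    · rw [hA, Set.mem_setOf_eq] at h
      obtain ⟨e, he, hv⟩ := h
      exact ⟨e, fun _ => ⟨he, hv⟩⟩
    · exact ⟨s(v0, v0), fun hc => absurd hc h⟩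
  choose eA heA using hAex
  have hAmap : Set.MapsTo (fun v => (eA v, v)) A {p : Sym2 V × V | p.1 ∈ W ∧ p.2 ∈ p.1} :=
    fun v hv => ⟨(heA v hv).1, (heA v hv).2⟩
  have hAinj : Set.InjOn (fun v => (eA v, v)) A :=
    fun a _ b _ h => congrArg Prod.snd h
  have hAcard : A.ncard ≤ 2 * W.ncard :=
    le_trans (ncard_le_of_injOn _ hAmap hAinj (Set.toFinite _) (Set.toFinite _))
      (ncard_pairs_le W)
  have htot : A.ncard + B.ncard = Fintype.card V := by
    rw [hB, Set.ncard_add_ncard_compl, Nat.card_eq_fintype_card]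
  have hWk : W.ncard ≤ k := hweak
  omega
end

section
/- Let K be an open critical clique of a finite simple graph G (that is, N(K) does not induce a clique in G), and let L = (S,W) be any STC-labeling of G. Then every vertex v ∈ K is an endpoint of at least one weak edge. Consequently, if L has at most k weak edges, then the total number of vertices of G lying in open critical cliques is at most 2k. -/
/-- An open critical clique: a critical clique `K` such that `N(K)` does not induce
a clique. -/
def IsOpenCriticalClique {V : Type*} (G : SimpleGraph V) (K : Set V) : Prop :=
  IsCriticalClique G K ∧ ¬ G.IsClique (cliqueNbhd G K)

/-- Under any STC-labeling, every vertex of an open critical clique is the endpoint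
of a weak edge; consequently, if there are at most `k` weak edges, at most `2k`
vertices lie in open critical cliques. -/
theorem open_critical_clique_weak_edges {V : Type*} [Fintype V]
    (G : SimpleGraph V) (S : Set (Sym2 V)) (hS : IsSTCLabeling G S) :
    (∀ K : Set V, IsOpenCriticalClique G K →
      ∀ v ∈ K, ∃ e ∈ G.edgeSet \ S, v ∈ e) ∧
    (∀ k : ℕ, (G.edgeSet \ S).ncard ≤ k →
      {v : V | ∃ K : Set V, IsOpenCriticalClique G K ∧ v ∈ K}.ncard ≤ 2 * k) := by
  classical
  have part1 : ∀ K : Set V, IsOpenCriticalClique G K →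
      ∀ v ∈ K, ∃ e ∈ G.edgeSet \ S, v ∈ e := by
    intro K hK v hv
    obtain ⟨⟨⟨hclique, hext⟩, _⟩, hnot⟩ := hK
    rw [SimpleGraph.isClique_iff, Set.Pairwise] at hnot
    push_neg at hnot
    obtain ⟨a, ha, b, hb, hab, hnadj⟩ := hnot
    obtain ⟨haK, u, huK, hua⟩ := ha
    obtain ⟨hbK, w, hwK, hwb⟩ := hb
    have hva : G.Adj v a := (hext u huK v hv a haK).mp hua
    have hvb : G.Adj v b := (hext w hwK v hv b hbK).mp hwb
    by_cases hsa : s(v, a) ∈ S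
    · by_cases hsb : s(v, b) ∈ S
      · exact absurd (hS.2 a v b (Sym2.eq_swap ▸ hsa) hsb hab) hnadj
      · exact ⟨s(v, b), ⟨hvb, hsb⟩, Sym2.mem_mk_left v b⟩
    · exact ⟨s(v, a), ⟨hva, hsa⟩, Sym2.mem_mk_left v a⟩
  refine ⟨part1, ?_⟩
  intro k hk
  set W : Set (Sym2 V) := G.edgeSet \ S with hW
  have hWfin : W.Finite := Set.toFinite _
  set Wf : Finset (Sym2 V) := hWfin.toFinset with hWf
  set F : Finset V := Wf.biUnion (fun e => {e.out.1, e.out.2}) with hF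
  have hsub : {v : V | ∃ K : Set V, IsOpenCriticalClique G K ∧ v ∈ K} ⊆ ↑F := by
    intro v hv
    obtain ⟨K, hK, hvK⟩ := hv
    obtain ⟨e, he, hve⟩ := part1 K hK v hvK
    simp only [hF, Finset.coe_biUnion, Set.mem_iUnion]
    refine ⟨e, hWfin.mem_toFinset.mpr he, ?_⟩
    have hout : s(e.out.1, e.out.2) = e := by rw [Sym2.mk, Prod.mk.eta, e.out_eq]
    rw [← hout] at hve
    rcases Sym2.mem_iff.mp hve with h | h <;> simp [h]
  calc {v : V | ∃ K : Set V, IsOpenCriticalClique G K ∧ v ∈ K}.ncard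
      ≤ (↑F : Set V).ncard := Set.ncard_le_ncard hsub (Set.toFinite _)
    _ = F.card := by rw [Set.ncard_coe_finset]
    _ ≤ ∑ e ∈ Wf, ({e.out.1, e.out.2} : Finset V).card := Finset.card_biUnion_le
    _ ≤ ∑ _e ∈ Wf, 2 := Finset.sum_le_sum (fun e _ => Finset.card_insert_le _ _ |>.trans (by simp))
    _ = 2 * Wf.card := by rw [Finset.sum_const, smul_eq_mul, mul_comm]
    _ ≤ 2 * k := by
        have : W.ncard = Wf.card := Set.ncard_eq_toFinset_card W hWfin
        omega
end

section
/- Let G = (V,E) be a finite simple graph in which every closed critical clique K satisfies |K| ≤ |E(N(K), N²(K))|, where E(N(K), N²(K)) is the set of edges of G with one endpoint in N(K) and one endpoint in N²(K). If L is an STC-labeling of G with at most k weak edges, then the total number of vertices of G lying in closed critical cliques is at most 2k. -/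
section Aux

variable {V : Type*} (G : SimpleGraph V)

/-- Every vertex of a same-ext-nbhd clique is adjacent to every vertex of its
neighborhood. -/
lemma adj_of_mem_cliqueNbhd {K : Set V} (h : CliqueSameExtNbhd G K)
    {u x : V} (hu : u ∈ K) (hx : x ∈ cliqueNbhd G K) : G.Adj u x := by
  obtain ⟨hxK, u₀, hu₀, hadj⟩ := hx
  exact (h.2 u hu u₀ hu₀ x hxK).mpr hadj

/-- Two critical cliques sharing a vertex are equal. -/
lemma critical_unique {K K' : Set V} (hK : IsCriticalClique G K)
    (hK' : IsCriticalClique G K') {u : V} (hu : u ∈ K) (hu' : u ∈ K') : K = K' := by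
  have hadju : ∀ a ∈ K ∪ K', a ≠ u → G.Adj a u := by
    rintro a (haK | haK') hne
    · exact hK.1.1 haK hu hne
    · exact hK'.1.1 haK' hu' hne
  have hcs : CliqueSameExtNbhd G (K ∪ K') := by
    constructor
    · intro a ha b hb hab
      by_cases hbu : b = u
      · subst hbu; exact hadju a ha hab
      by_cases hau : a = u
      · subst hau; exact (hadju b hb hbu).symm
      rcases ha with haK | haK'
      · by_cases hbK : b ∈ K
        · exact hK.1.1 haK hbK hab
        · have hbK' : b ∈ K' := hb.resolve_left hbK
          have h1 : G.Adj u b := hK'.1.1 hu' hbK' (fun h => hbu h.symm)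
          exact (hK.1.2 a haK u hu b hbK).mpr h1
      · by_cases hbK' : b ∈ K'
        · exact hK'.1.1 haK' hbK' hab
        · have hbK : b ∈ K := hb.resolve_right hbK'
          have h1 : G.Adj u b := hK.1.1 hu hbK (fun h => hbu h.symm)
          exact (hK'.1.2 a haK' u hu' b hbK').mpr h1
    · intro a ha b hb w hw
      have hwK : w ∉ K := fun h => hw (Or.inl h)
      have hwK' : w ∉ K' := fun h => hw (Or.inr h)
      have key : ∀ c ∈ K ∪ K', (G.Adj c w ↔ G.Adj u w) := by
        rintro c (hcK | hcK')
        · exact hK.1.2 c hcK u hu w hwK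
        · exact hK'.1.2 c hcK' u hu' w hwK'
      rw [key a ha, key b hb]
  have h1 := hK.2 (K ∪ K') Set.subset_union_left hcs
  have h2 := hK'.2 (K ∪ K') Set.subset_union_right hcs
  exact h1.symm.trans h2

/-- No adjacency between two distinct closed critical cliques. -/
lemma no_adj_closed {K K' : Set V} (hK : IsClosedCriticalClique G K)
    (hK' : IsClosedCriticalClique G K') (hne : K ≠ K')
    {u u' : V} (hu : u ∈ K) (hu' : u' ∈ K') (hadj : G.Adj u u') : False := by
  have hdisj : ∀ z, z ∈ K → z ∉ K' := fun z hz hz' =>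
    hne (critical_unique G hK.1 hK'.1 hz hz')
  have hu'K : u' ∉ K := fun h => hdisj u' h hu'
  have hfull : ∀ z ∈ K, ∀ z' ∈ K', G.Adj z z' := by
    intro z hz z' hz'
    have h1 : G.Adj z u' := (hK.1.1.2 u hu z hz u' hu'K).mp hadj
    have hzK' : z ∉ K' := hdisj z hz
    exact ((hK'.1.1.2 u' hu' z' hz' z hzK').mp h1.symm).symm
  have huN' : u ∈ cliqueNbhd G K' := ⟨hdisj u hu, u', hu', hadj.symm⟩
  have hu'N : u' ∈ cliqueNbhd G K := ⟨hu'K, u, hu, hadj⟩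
  have hcs : CliqueSameExtNbhd G (K ∪ K') := by
    constructor
    · rintro a (haK | haK') b (hbK | hbK') hab
      · exact hK.1.1.1 haK hbK hab
      · exact hfull a haK b hbK'
      · exact (hfull b hbK a haK').symm
      · exact hK'.1.1.1 haK' hbK' hab
    · intro a ha b hb w hw
      have hwK : w ∉ K := fun h => hw (Or.inl h)
      have hwK' : w ∉ K' := fun h => hw (Or.inr h)
      have key : ∀ c ∈ K ∪ K', (G.Adj c w ↔ w ∈ cliqueNbhd G K) := by
        rintro c (hcK | hcK')
        · constructor
          · intro h; exact ⟨hwK, c, hcK, h⟩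
          · intro h; exact adj_of_mem_cliqueNbhd G hK.1.1 hcK h
        · constructor
          · intro h
            have hwN' : w ∈ cliqueNbhd G K' := ⟨hwK', c, hcK', h⟩
            have hwu : G.Adj w u := hK'.2 hwN' huN' (fun he => hwK (he ▸ hu))
            exact ⟨hwK, u, hu, hwu.symm⟩
          · intro h
            have hwu' : G.Adj u' w := hK.2 hu'N h (fun he => hwK' (he ▸ hu'))
            exact (hK'.1.1.2 c hcK' u' hu' w hwK').mpr hwu'
      rw [key a ha, key b hb]
  have h1 := hK.1.2 (K ∪ K') Set.subset_union_left hcs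
  exact hdisj u' (h1 ▸ (Or.inr hu' : u' ∈ K ∪ K')) hu'

/-- A vertex in the neighborhood of a nonempty closed critical clique lies in no
closed critical clique. -/
lemma nbhd_not_in_clique {K : Set V} (hK : IsClosedCriticalClique G K)
    {u x : V} (hu : u ∈ K) (hx : x ∈ cliqueNbhd G K) :
    ∀ K'' : Set V, IsClosedCriticalClique G K'' → x ∉ K'' := by
  intro K'' hK'' hxK''
  obtain ⟨hxK, u₀, hu₀, hadj⟩ := hx
  exact no_adj_closed G hK hK'' (fun h => hxK (h ▸ hxK'')) hu₀ hxK'' hadj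

end Aux

/-- In a graph in which every closed critical clique `K` satisfies
`|K| ≤ |E(N(K), N²(K))|`, any STC-labeling with at most `k` weak edges leaves at
most `2k` vertices in closed critical cliques. -/
theorem closed_critical_clique_vertex_bound {V : Type*} [Fintype V]
    (G : SimpleGraph V)
    (hred : ∀ K : Set V, IsClosedCriticalClique G K →
      K.ncard ≤ (edgesBetween G (cliqueNbhd G K) (cliqueNbhd2 G K)).ncard)
    (S : Set (Sym2 V)) (hS : IsSTCLabeling G S)
    (k : ℕ) (hweak : (G.edgeSet \ S).ncard ≤ k) :
    {v : V | ∃ K : Set V, IsClosedCriticalClique G K ∧ v ∈ K}.ncard ≤ 2 * k := by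
  classical
  rcases isEmpty_or_nonempty V with hV | hV
  · have : {v : V | ∃ K : Set V, IsClosedCriticalClique G K ∧ v ∈ K} = ∅ :=
      Set.eq_empty_of_isEmpty _
    simp [this]
  set W : Set (Sym2 V) := G.edgeSet \ S with hWdef
  set X : Set V := {v : V | ∃ K : Set V, IsClosedCriticalClique G K ∧ v ∈ K} with hXdef
  -- the "all E(N(K),N²(K)) edges are weak" lemma for cliques failing cond2
  have hallweak : ∀ K : Set V, IsClosedCriticalClique G K →
      (¬ ∃ x ∈ cliqueNbhd G K, ∀ u ∈ K, s(u, x) ∉ S) →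
      ∀ e ∈ edgesBetween G (cliqueNbhd G K) (cliqueNbhd2 G K), e ∈ W := by
    intro K hK hc e he
    obtain ⟨heE, x, hx, y, hy, rfl⟩ := he
    refine ⟨heE, fun heS => ?_⟩
    push_neg at hc
    obtain ⟨u, hu, huS⟩ := hc x hx
    have hne : u ≠ y := fun h => hy.1 (h ▸ hu)
    have hadj : G.Adj u y := hS.2 u x y huS heS hne
    exact hy.2.1 ⟨hy.1, u, hu, hadj⟩
  -- injection into E(N(K),N²(K)) from hred
  have hinj3 : ∀ K : Set V, ∃ f : V → Sym2 V, IsClosedCriticalClique G K →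
      (Set.InjOn f K ∧
        Set.MapsTo f K (edgesBetween G (cliqueNbhd G K) (cliqueNbhd2 G K))) := by
    intro K
    by_cases h : IsClosedCriticalClique G K
    · haveI : Nonempty (Sym2 V) := ⟨s(Classical.arbitrary V, Classical.arbitrary V)⟩
      have hfin : K.Finite := Set.toFinite K
      have hle : K.encard ≤ (edgesBetween G (cliqueNbhd G K) (cliqueNbhd2 G K)).encard := by
        rw [← hfin.cast_ncard_eq, ← (Set.toFinite _).cast_ncard_eq]
        exact_mod_cast hred K h
      obtain ⟨f, hf1, hf2⟩ := hfin.exists_injOn_of_encard_le hle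
      exact ⟨f, fun _ => ⟨hf2, fun a ha => hf1 ha⟩⟩
    · exact ⟨fun v => s(v, v), fun hc => absurd hc h⟩
  choose f3 hf3 using hinj3
  -- the N(K)-endpoint of an edge of E(N(K),N²(K))
  have hnend : ∀ K : Set V, ∀ e : Sym2 V, ∃ x : V,
      e ∈ edgesBetween G (cliqueNbhd G K) (cliqueNbhd2 G K) →
      (x ∈ cliqueNbhd G K ∧ ∃ y ∈ cliqueNbhd2 G K, e = s(x, y)) := by
    intro K e
    by_cases h : e ∈ edgesBetween G (cliqueNbhd G K) (cliqueNbhd2 G K)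
    · obtain ⟨_, x, hx, y, hy, he⟩ := h
      exact ⟨x, fun _ => ⟨hx, y, hy, he⟩⟩
    · exact ⟨Classical.arbitrary V, fun hc => absurd hc h⟩
  choose nend hnendspec using hnend
  -- the cond2 witness
  have hw2 : ∀ K : Set V, ∃ x : V,
      (∃ x' ∈ cliqueNbhd G K, ∀ u ∈ K, s(u, x') ∉ S) →
      (x ∈ cliqueNbhd G K ∧ ∀ u ∈ K, s(u, x) ∉ S) := by
    intro K
    by_cases h : ∃ x' ∈ cliqueNbhd G K, ∀ u ∈ K, s(u, x') ∉ S
    · obtain ⟨x, hx1, hx2⟩ := h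
      exact ⟨x, fun _ => ⟨hx1, hx2⟩⟩
    · exact ⟨Classical.arbitrary V, fun hc => absurd hc h⟩
  choose w2 hw2spec using hw2
  -- the clique of a vertex of X
  have hKv : ∀ v : V, ∃ K : Set V, v ∈ X → (IsClosedCriticalClique G K ∧ v ∈ K) := by
    intro v
    by_cases h : v ∈ X
    · obtain ⟨K, hK⟩ := h
      exact ⟨K, fun _ => hK⟩
    · exact ⟨∅, fun hc => absurd hc h⟩
  choose Kv hKvspec using hKv
  -- the slot function
  set slot : V → Sym2 V × V := fun v =>
    if (∃ x ∈ cliqueNbhd G (Kv v), ∀ u ∈ Kv v, s(u, x) ∉ S) then (s(v, w2 (Kv v)), v)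
    else (f3 (Kv v) v, nend (Kv v) (f3 (Kv v) v)) with hslotdef
  set T : Set (Sym2 V × V) := {p : Sym2 V × V | p.1 ∈ W ∧ p.2 ∈ p.1} with hTdef
  have hmaps : ∀ v ∈ X, slot v ∈ T := by
    intro v hv
    obtain ⟨hKc, hvK⟩ := hKvspec v hv
    by_cases h2 : ∃ x ∈ cliqueNbhd G (Kv v), ∀ u ∈ Kv v, s(u, x) ∉ S
    · obtain ⟨hxN, hxW⟩ := hw2spec (Kv v) h2
      have hadj : G.Adj v (w2 (Kv v)) := adj_of_mem_cliqueNbhd G hKc.1.1 hvK hxN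
      have h1 : s(v, w2 (Kv v)) ∈ W := ⟨G.mem_edgeSet.mpr hadj, hxW v hvK⟩
      simp only [hslotdef, if_pos h2]
      exact ⟨h1, Sym2.mem_mk_left _ _⟩
    · have heE : f3 (Kv v) v ∈
          edgesBetween G (cliqueNbhd G (Kv v)) (cliqueNbhd2 G (Kv v)) :=
        (hf3 (Kv v) hKc).2 hvK
      have heW : f3 (Kv v) v ∈ W := hallweak (Kv v) hKc h2 _ heE
      obtain ⟨hxN, y, hy, hey⟩ := hnendspec (Kv v) (f3 (Kv v) v) heE
      simp only [hslotdef, if_neg h2]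
      refine ⟨heW, ?_⟩
      show nend (Kv v) (f3 (Kv v) v) ∈ f3 (Kv v) v
      have hmem : nend (Kv v) (f3 (Kv v) v) ∈ s(nend (Kv v) (f3 (Kv v) v), y) :=
        Sym2.mem_mk_left _ y
      rwa [← hey] at hmem
  have hinj : Set.InjOn slot X := by
    intro v hv v' hv' heq
    obtain ⟨hKc, hvK⟩ := hKvspec v hv
    obtain ⟨hKc', hvK'⟩ := hKvspec v' hv'
    by_cases h2 : ∃ x ∈ cliqueNbhd G (Kv v), ∀ u ∈ Kv v, s(u, x) ∉ S <;>
      by_cases h2' : ∃ x ∈ cliqueNbhd G (Kv v'), ∀ u ∈ Kv v', s(u, x) ∉ S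
    · simp only [hslotdef, if_pos h2, if_pos h2', Prod.mk.injEq] at heq
      exact heq.2
    · -- v type 2, v' type 3 : impossible since v = nend ... ∈ N(Kv v') is in no clique
      simp only [hslotdef, if_pos h2, if_neg h2', Prod.mk.injEq] at heq
      exfalso
      have heE : f3 (Kv v') v' ∈
          edgesBetween G (cliqueNbhd G (Kv v')) (cliqueNbhd2 G (Kv v')) :=
        (hf3 (Kv v') hKc').2 hvK'
      obtain ⟨hxN, _⟩ := hnendspec (Kv v') (f3 (Kv v') v') heE
      have := nbhd_not_in_clique G hKc' hvK' hxN (Kv v) hKc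
      rw [← heq.2] at this
      exact this hvK
    · simp only [hslotdef, if_neg h2, if_pos h2', Prod.mk.injEq] at heq
      exfalso
      have heE : f3 (Kv v) v ∈
          edgesBetween G (cliqueNbhd G (Kv v)) (cliqueNbhd2 G (Kv v)) :=
        (hf3 (Kv v) hKc).2 hvK
      obtain ⟨hxN, _⟩ := hnendspec (Kv v) (f3 (Kv v) v) heE
      have := nbhd_not_in_clique G hKc hvK hxN (Kv v') hKc'
      rw [heq.2] at this
      exact this hvK'
    · simp only [hslotdef, if_neg h2, if_neg h2', Prod.mk.injEq] at heq
      by_cases hKK' : Kv v = Kv v'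
      · have hvK'2 : v' ∈ Kv v := hKK' ▸ hvK'
        refine (hf3 (Kv v) hKc).1 hvK hvK'2 ?_
        rw [heq.1, hKK']
      · exfalso
        have heE : f3 (Kv v) v ∈
            edgesBetween G (cliqueNbhd G (Kv v)) (cliqueNbhd2 G (Kv v)) :=
          (hf3 (Kv v) hKc).2 hvK
        have heE' : f3 (Kv v') v' ∈
            edgesBetween G (cliqueNbhd G (Kv v')) (cliqueNbhd2 G (Kv v')) :=
          (hf3 (Kv v') hKc').2 hvK'
        obtain ⟨hxN, _⟩ := hnendspec (Kv v) (f3 (Kv v) v) heE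
        obtain ⟨hxN', _⟩ := hnendspec (Kv v') (f3 (Kv v') v') heE'
        set x := nend (Kv v) (f3 (Kv v) v) with hxdef
        have hxN'2 : x ∈ cliqueNbhd G (Kv v') := by rw [heq.2]; exact hxN'
        -- derive cond2 (Kv v), contradiction
        refine h2 ⟨x, hxN, fun u hu => ?_⟩
        have hadjux : G.Adj u x := adj_of_mem_cliqueNbhd G hKc.1.1 hu hxN
        have huK' : u ∉ Kv v' := fun h =>
          hKK' (critical_unique G hKc.1 hKc'.1 hu h)
        have huNK' : u ∉ cliqueNbhd G (Kv v') := by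
          rintro ⟨_, z, hz, hadj⟩
          exact no_adj_closed G hKc' hKc (Ne.symm hKK') hz hu hadj
        have huN2 : u ∈ cliqueNbhd2 G (Kv v') := ⟨huK', huNK', x, hxN'2, hadjux.symm⟩
        have hmem : s(x, u) ∈
            edgesBetween G (cliqueNbhd G (Kv v')) (cliqueNbhd2 G (Kv v')) :=
          ⟨G.mem_edgeSet.mpr hadjux.symm, x, hxN'2, u, huN2, rfl⟩
        have hwk : s(x, u) ∈ W := hallweak (Kv v') hKc' h2' _ hmem
        rw [Sym2.eq_swap]
        exact hwk.2
  have step1 : X.ncard ≤ T.ncard :=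
    Set.ncard_le_ncard_of_injOn slot hmaps hinj (Set.toFinite T)
  -- now bound T by 2 * |W|
  have hdec : ∀ e : Sym2 V, ∃ p : V × V, e = s(p.1, p.2) := by
    intro e
    induction e using Sym2.ind with
    | _ x y => exact ⟨(x, y), rfl⟩
  choose rep hrep using hdec
  set g : Sym2 V × V → Sym2 V × Bool := fun p =>
    (p.1, if p.2 = (rep p.1).1 then true else false) with hgdef
  set U : Set (Sym2 V × Bool) := W ×ˢ (Set.univ : Set Bool) with hUdef
  have hmaps2 : ∀ p ∈ T, g p ∈ U := fun p hp => ⟨hp.1, Set.mem_univ _⟩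
  have hinj2 : Set.InjOn g T := by
    intro p hp q hq heq
    simp only [hgdef, Prod.mk.injEq] at heq
    obtain ⟨h1, h2⟩ := heq
    refine Prod.ext h1 ?_
    by_cases hp2 : p.2 = (rep p.1).1 <;> by_cases hq2 : q.2 = (rep q.1).1
    · rw [hp2, hq2, h1]
    · rw [if_pos hp2, if_neg hq2] at h2; simp at h2
    · rw [if_neg hp2, if_pos hq2] at h2; simp at h2
    · have hpmem : p.2 ∈ p.1 := hp.2
      have hqmem : q.2 ∈ q.1 := hq.2
      rw [hrep p.1, Sym2.mem_iff] at hpmem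
      rw [hrep q.1, Sym2.mem_iff] at hqmem
      have hp2' : p.2 = (rep p.1).2 := hpmem.resolve_left hp2
      have hq2' : q.2 = (rep q.1).2 := hqmem.resolve_left hq2
      rw [hp2', hq2', h1]
  have step2 : T.ncard ≤ U.ncard :=
    Set.ncard_le_ncard_of_injOn g hmaps2 hinj2 (Set.toFinite U)
  have step3 : U.ncard = 2 * W.ncard := by
    rw [← Nat.card_coe_set_eq, hUdef,
      Nat.card_congr (Equiv.Set.prod W (Set.univ : Set Bool)), Nat.card_prod,
      Nat.card_coe_set_eq, Nat.card_coe_set_eq, Set.ncard_univ]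
    simp [Nat.card_eq_fintype_card, mul_comm]
  calc X.ncard ≤ T.ncard := step1
    _ ≤ U.ncard := step2
    _ = 2 * W.ncard := step3
    _ ≤ 2 * k := by omega
end

section
/- Let G = (V,E) be a finite simple graph and let F ⊆ V be an independent set such that all vertices of F have exactly the same neighborhood N(F), with |F| > |N(F)|. Let F' ⊆ F be any subset of size |F| − |N(F)| and let G' be the induced subgraph of G on V \ F'. Then G has an STC-labeling with at least ℓ strong edges if and only if G' has an STC-labeling with at least ℓ strong edges. -/
private lemma sym2_mem_image {α β : Type*} {g : α → β} {S' : Set (Sym2 α)} {u v : β}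
    (h : s(u, v) ∈ Sym2.map g '' S') :
    ∃ a b : α, g a = u ∧ g b = v ∧ s(a, b) ∈ S' := by
  obtain ⟨e, heS, he⟩ := h
  induction e using Sym2.ind with
  | _ a b =>
    rw [Sym2.map_pair_eq, Sym2.eq_iff] at he
    rcases he with ⟨h1, h2⟩ | ⟨h1, h2⟩
    · exact ⟨a, b, h1, h2, heS⟩
    · exact ⟨b, a, h2, h1, by rwa [Sym2.eq_swap]⟩

private lemma induce_adj' {V : Type*} {G : SimpleGraph V} {s : Set V} {a b : s} :
    (G.induce s).Adj a b ↔ G.Adj ↑a ↑b := Iff.rfl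

private lemma exists_swap_fun {V : Type*} [Nonempty V] (A B : Set V) (f : V → V)
    (hd : ∀ x ∈ B, x ∉ A) (hinj : Set.InjOn f A) (hmap : ∀ x ∈ A, f x ∈ B) :
    ∃ π : V → V, Function.Involutive π ∧ (∀ x ∈ A, π x = f x) ∧
      (∀ x ∈ f '' A, π x ∈ A) ∧ (∀ x, x ∉ A → x ∉ f '' A → π x = x) := by
  classical
  set π : V → V := fun x =>
    if x ∈ A then f x else if x ∈ f '' A then Function.invFunOn f A x else x with hπ
  have hA : ∀ x ∈ A, π x = f x := fun x hx => by simp [hπ, hx]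
  have hfA : ∀ x ∈ f '' A, π x ∈ A ∧ f (π x) = x := by
    rintro x hx
    have hxA : x ∉ A := by obtain ⟨a, ha, rfl⟩ := hx; exact hd _ (hmap a ha)
    have hx' : π x = Function.invFunOn f A x := by
      simp only [hπ]; rw [if_neg hxA, if_pos hx]
    rw [hx']
    obtain ⟨a, ha, rfl⟩ := hx
    exact ⟨Function.invFunOn_apply_mem ha, Function.invFunOn_apply_eq ha⟩
  have hfix : ∀ x, x ∉ A → x ∉ f '' A → π x = x := fun x h1 h2 => by simp only [hπ]; rw [if_neg h1, if_neg h2]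
  refine ⟨π, ?_, hA, fun x hx => (hfA x hx).1, hfix⟩
  intro x
  by_cases h1 : x ∈ A
  · rw [hA x h1]
    have hfx : f x ∈ f '' A := ⟨x, h1, rfl⟩
    have h2 := hfA _ hfx
    exact hinj h2.1 h1 h2.2
  by_cases h2 : x ∈ f '' A
  · have h3 := hfA x h2
    rw [hA _ h3.1]
    exact h3.2
  · rw [hfix x h1 h2, hfix x h1 h2]

private lemma stc_map_involutive {V : Type*} {G : SimpleGraph V} {S : Set (Sym2 V)} {π : V → V}
    (hπ : Function.Involutive π) (hadj : ∀ u v, G.Adj u v → G.Adj (π u) (π v))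
    (hS : IsSTCLabeling G S) : IsSTCLabeling G (Sym2.map π '' S) := by
  constructor
  · rintro e ⟨e0, he0, rfl⟩
    induction e0 using Sym2.ind with
    | _ a b =>
      rw [Sym2.map_pair_eq, SimpleGraph.mem_edgeSet]
      exact hadj a b (hS.1 he0)
  · intro u v w huv hvw hne
    obtain ⟨a, b, ha, hb, hab⟩ := sym2_mem_image huv
    obtain ⟨c, d, hc, hd, hcd⟩ := sym2_mem_image hvw
    have hau : a = π u := by rw [← ha, hπ a]
    have hbv : b = π v := by rw [← hb, hπ b]
    have hcv : c = π v := by rw [← hc, hπ c]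
    have hdw : d = π w := by rw [← hd, hπ d]
    subst hau hbv hcv hdw
    have hne' : π u ≠ π w := fun h => hne (hπ.injective h)
    have h1 := hS.2 _ _ _ hab hcd hne'
    have h2 := hadj _ _ h1
    rwa [hπ, hπ] at h2

/-- Lifting a labeling of an induced subgraph back to the whole graph. -/
private lemma lift_labeling {V : Type*} (G : SimpleGraph V) (s : Set V) (S' : Set (Sym2 s))
    (h : IsSTCLabeling (G.induce s) S') :
    IsSTCLabeling G (Sym2.map (Subtype.val) '' S') := by
  constructor
  · rintro e ⟨e0, he0, rfl⟩
    induction e0 using Sym2.ind with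
    | _ a b =>
      rw [Sym2.map_pair_eq, SimpleGraph.mem_edgeSet]
      exact (induce_adj'.mp (h.1 he0))
  · intro u v w huv hvw hne
    obtain ⟨a, b, ha, hb, hab⟩ := sym2_mem_image huv
    obtain ⟨c, d, hc, hd, hcd⟩ := sym2_mem_image hvw
    have hbc : b = c := Subtype.ext (by rw [hb, hc])
    subst hbc
    have hne' : a ≠ d := fun h => hne (by rw [← ha, ← hd, h])
    have := h.2 a b d hab hcd hne'
    rw [induce_adj', ha, hd] at this
    exact this

/-- Restricting a labeling all of whose strong edges avoid the removed set. -/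
private lemma restrict_labeling {V : Type*} (G : SimpleGraph V) (s : Set V) (S : Set (Sym2 V))
    (h : IsSTCLabeling G S) (havoid : ∀ e ∈ S, ∀ x ∈ e, x ∈ s) :
    ∃ S' : Set (Sym2 s), IsSTCLabeling (G.induce s) S' ∧
      Sym2.map (Subtype.val) '' S' = S := by
  refine ⟨{e | Sym2.map Subtype.val e ∈ S}, ⟨?_, ?_⟩, ?_⟩
  · intro e he
    induction e using Sym2.ind with
    | _ a b =>
      rw [Set.mem_setOf_eq, Sym2.map_pair_eq] at he
      have := h.1 he
      rw [SimpleGraph.mem_edgeSet] at this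
      exact induce_adj'.mpr this
  · intro u v w huv hvw hne
    rw [Set.mem_setOf_eq, Sym2.map_pair_eq] at huv hvw
    have hne' : (u : V) ≠ (w : V) := fun h => hne (Subtype.ext h)
    exact induce_adj'.mpr (h.2 _ _ _ huv hvw hne')
  · apply Set.Subset.antisymm
    · rintro e ⟨e0, he0, rfl⟩; exact he0
    · intro e he
      induction e using Sym2.ind with
      | _ a b =>
        have hane : a ∈ s := havoid _ he a (Sym2.mem_mk_left a b)
        have hbne : b ∈ s := havoid _ he b (Sym2.mem_mk_right a b)
        refine ⟨s(⟨a, hane⟩, ⟨b, hbne⟩), ?_, by rw [Sym2.map_pair_eq]⟩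
        rw [Set.mem_setOf_eq, Sym2.map_pair_eq]
        exact he

/-- Safeness of the family reduction rule: if `F` is an independent set whose
vertices all have the same neighborhood `NF` with `|F| > |NF|`, and `F' ⊆ F` has
size `|F| - |NF|`, then `G` has an STC-labeling with at least `ℓ` strong edges iff
the induced subgraph on `V \ F'` has one. -/
theorem family_reduction_safe {V : Type*} [Fintype V] (G : SimpleGraph V)
    (F NF : Set V)
    (hindep : ∀ u ∈ F, ∀ v ∈ F, ¬ G.Adj u v)
    (hnbhd : ∀ v ∈ F, G.neighborSet v = NF)
    (hbig : NF.ncard < F.ncard)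
    (F' : Set V) (hsub : F' ⊆ F) (hcard : F'.ncard = F.ncard - NF.ncard)
    (ℓ : ℕ) :
    (∃ S : Set (Sym2 V), IsSTCLabeling G S ∧ ℓ ≤ S.ncard) ↔
    (∃ S' : Set (Sym2 (F'ᶜ : Set V)),
      IsSTCLabeling (G.induce F'ᶜ) S' ∧ ℓ ≤ S'.ncard) := by
  classical
  constructor
  · rintro ⟨S, hS, hl⟩
    -- V is nonempty since F is
    have hFne : F.Nonempty := Set.nonempty_of_ncard_ne_zero (by omega)
    have hVne : Nonempty V := ⟨hFne.choose⟩
    -- the set of vertices of F touched by a strong edge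
    set T : Set V := {v | v ∈ F ∧ ∃ e ∈ S, v ∈ e} with hTdef
    have hTF : T ⊆ F := fun v hv => hv.1
    -- witness function: each touched vertex has a strong neighbor in NF
    have hwit : ∀ v, ∃ u, v ∈ T → s(v, u) ∈ S ∧ u ∈ NF := by
      intro v
      by_cases hv : v ∈ T
      · obtain ⟨hvF, e, heS, hve⟩ := hv
        refine ⟨Sym2.Mem.other hve, fun _ => ⟨?_, ?_⟩⟩
        · rwa [Sym2.other_spec hve]
        · have hadj : G.Adj v (Sym2.Mem.other hve) := by
            have := hS.1 heS
            rwa [← Sym2.other_spec hve, SimpleGraph.mem_edgeSet] at this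
          rw [← hnbhd v hvF]; exact hadj
      · exact ⟨Classical.arbitrary V, fun h => absurd h hv⟩
    choose w hw using hwit
    have hinjw : Set.InjOn w T := by
      intro v1 h1 v2 h2 heq
      by_contra hne
      have hadj := hS.2 v1 (w v1) v2 ((hw v1) h1).1
        (by rw [Sym2.eq_swap, heq]; exact ((hw v2) h2).1) hne
      exact hindep v1 (hTF h1) v2 (hTF h2) hadj
    have hTcard : T.ncard ≤ NF.ncard := by
      have himg : w '' T ⊆ NF := by rintro _ ⟨v, hv, rfl⟩; exact ((hw v) hv).2
      calc T.ncard = (w '' T).ncard := (Set.ncard_image_of_injOn hinjw).symm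
        _ ≤ NF.ncard := Set.ncard_le_ncard himg (Set.toFinite NF)
    -- cardinality bookkeeping
    have e1 : (F \ F').ncard + F'.ncard = F.ncard :=
      Set.ncard_diff_add_ncard_of_subset hsub (Set.toFinite F)
    have e2 : (T ∩ F').ncard + (T \ F').ncard = T.ncard :=
      Set.ncard_inter_add_ncard_diff_eq_ncard T F' (Set.toFinite T)
    have e4 : (F \ F') ∩ T = T \ F' := by
      ext x
      constructor
      · rintro ⟨⟨_, hx2⟩, hx3⟩; exact ⟨hx3, hx2⟩
      · rintro ⟨hx1, hx2⟩; exact ⟨⟨hTF hx1, hx2⟩, hx1⟩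
    have e3 : (T \ F').ncard + ((F \ F') \ T).ncard = (F \ F').ncard := by
      rw [← e4]
      exact Set.ncard_inter_add_ncard_diff_eq_ncard (F \ F') T (Set.toFinite _)
    have key : (T ∩ F').ncard ≤ ((F \ F') \ T).ncard := by omega
    have keyen : (T ∩ F').encard ≤ ((F \ F') \ T).encard := by
      rw [← Set.Finite.cast_ncard_eq (Set.toFinite _),
        ← Set.Finite.cast_ncard_eq (Set.toFinite _)]
      exact_mod_cast key
    obtain ⟨f, hfpre, hfinj⟩ :=
      Set.Finite.exists_injOn_of_encard_le (Set.toFinite (T ∩ F')) keyen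
    have hfmap : ∀ x ∈ T ∩ F', f x ∈ (F \ F') \ T := fun x hx => hfpre hx
    have hd : ∀ x ∈ (F \ F') \ T, x ∉ T ∩ F' := by
      rintro x ⟨⟨_, hx2⟩, _⟩ ⟨_, hx4⟩; exact hx2 hx4
    obtain ⟨π, hπinv, hπA, hπfA, hπfix⟩ :=
      exists_swap_fun (T ∩ F') ((F \ F') \ T) f hd hfinj hfmap
    -- π fixes everything outside F
    have hAF : T ∩ F' ⊆ F := fun x hx => hTF hx.1
    have hfAF : f '' (T ∩ F') ⊆ F := by rintro _ ⟨x, hx, rfl⟩; exact (hfmap x hx).1.1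
    have hπfix' : ∀ x, x ∉ F → π x = x := fun x hx =>
      hπfix x (fun h => hx (hAF h)) (fun h => hx (hfAF h))
    have hπF : ∀ x ∈ F, π x ∈ F := by
      intro x hx
      by_cases h1 : x ∈ T ∩ F'
      · rw [hπA x h1]; exact (hfmap x h1).1.1
      by_cases h2 : x ∈ f '' (T ∩ F')
      · exact hAF (hπfA x h2)
      · rw [hπfix x h1 h2]; exact hx
    -- π preserves adjacency
    have hadjπ : ∀ u v, G.Adj u v → G.Adj (π u) (π v) := by
      intro u v h
      by_cases hu : u ∈ F <;> by_cases hv : v ∈ F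
      · exact absurd h (hindep u hu v hv)
      · rw [hπfix' v hv]
        have hvNF : v ∈ NF := by rw [← hnbhd u hu]; exact h
        have : v ∈ G.neighborSet (π u) := by rw [hnbhd _ (hπF u hu)]; exact hvNF
        exact this
      · rw [hπfix' u hu]
        have huNF : u ∈ NF := by rw [← hnbhd v hv]; exact h.symm
        have : u ∈ G.neighborSet (π v) := by rw [hnbhd _ (hπF v hv)]; exact huNF
        exact this.symm
      · rw [hπfix' u hu, hπfix' v hv]; exact h
    -- π moves touched vertices out of F'
    have hπT : ∀ x ∈ T, π x ∉ F' := by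
      intro x hx
      by_cases hx' : x ∈ F'
      · rw [hπA x ⟨hx, hx'⟩]
        exact (hfmap x ⟨hx, hx'⟩).1.2
      · have h1 : x ∉ T ∩ F' := fun h => hx' h.2
        have h2 : x ∉ f '' (T ∩ F') := by
          rintro ⟨y, hy, rfl⟩
          exact (hfmap y hy).2 hx
        rw [hπfix x h1 h2]; exact hx'
    -- the relabeled set
    set S₂ : Set (Sym2 V) := Sym2.map π '' S with hS₂def
    have hS₂ : IsSTCLabeling G S₂ := stc_map_involutive hπinv hadjπ hS
    have havoid : ∀ e ∈ S₂, ∀ x ∈ e, x ∈ (F'ᶜ : Set V) := by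
      rintro e ⟨e0, he0, rfl⟩ x hx
      rw [Sym2.mem_map] at hx
      obtain ⟨a, hae0, rfl⟩ := hx
      by_cases ha : a ∈ F
      · exact hπT a ⟨ha, e0, he0, hae0⟩
      · rw [hπfix' a ha]; exact fun h => ha (hsub h)
    have hcard2 : S₂.ncard = S.ncard :=
      Set.ncard_image_of_injective _ (Sym2.map.injective hπinv.injective)
    obtain ⟨S', hS', himg⟩ := restrict_labeling G F'ᶜ S₂ hS₂ havoid
    refine ⟨S', hS', ?_⟩
    have : S'.ncard = S₂.ncard := by
      rw [← himg, Set.ncard_image_of_injective _ (Sym2.map.injective Subtype.val_injective)]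
    omega
  · rintro ⟨S', hS', hl⟩
    refine ⟨Sym2.map (Subtype.val) '' S', lift_labeling G F'ᶜ S' hS', ?_⟩
    rw [Set.ncard_image_of_injective _ (Sym2.map.injective Subtype.val_injective)]
    exact hl
end

section
/- Let G = (V,E) be a diamond-free finite simple graph (containing no induced subgraph isomorphic to the diamond, i.e., K4 minus one edge). Then there exists an optimal STC-labeling L = (S,W) of G such that the spanning subgraph (V,S) is a cluster graph, i.e., every connected component of (V,S) is a clique. -/
/-- The diamond graph: `K₄` minus one edge. -/
def diamondGraph : SimpleGraph (Fin 4) :=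
  (⊤ : SimpleGraph (Fin 4)).deleteEdges {s(0, 1)}

/-! Take an optimal STC-labeling `S` and strong edges `uv`, `vw` with `u ≠ w`; then `uw` is an
edge. If `uw` were weak, making it strong would keep the labeling STC, contradicting optimality:
a new strong path `u - w - c` arises from a strong edge `wc`, and then `c` is adjacent to `v`
(as `c - w - v` is strong), so `u` and `c` are the two apexes of triangles on the common edge
`vw`. Without a diamond they must be adjacent. -/

namespace SimpleGraph

variable {V : Type*} (G : SimpleGraph V)

lemma nonempty_diamondGraph_embedding {a b c d : V} (hab : G.Adj a b) (hac : G.Adj a c)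
    (hbc : G.Adj b c) (hbd : G.Adj b d) (hcd : G.Adj c d) (had : ¬ G.Adj a d) (hne : a ≠ d) :
    Nonempty (diamondGraph ↪g G) := by
  refine ⟨⟨⟨![a, d, b, c], ?_⟩, ?_⟩⟩
  · intro i j h
    fin_cases i <;> fin_cases j <;> simp_all [hab.ne, hac.ne, hbc.ne, hbd.ne, hcd.ne,
      hab.ne', hac.ne', hbc.ne', hbd.ne', hcd.ne', hne.symm]
  · have hda : ¬ G.Adj d a := fun h => had h.symm
    intro i j
    change G.Adj (![a, d, b, c] i) (![a, d, b, c] j) ↔ diamondGraph.Adj i j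
    fin_cases i <;> fin_cases j <;>
      simp [diamondGraph, deleteEdges_adj, hab, hac, hbc, hbd, hcd,
        hab.symm, hac.symm, hbc.symm, hbd.symm, hcd.symm, had, hda]

variable {G}

lemma adj_of_triangles_of_diamondFree (hfree : IsEmpty (diamondGraph ↪g G)) {u v w c : V}
    (huv : G.Adj u v) (huw : G.Adj u w) (hvw : G.Adj v w) (hvc : G.Adj v c) (hwc : G.Adj w c)
    (huc : u ≠ c) : G.Adj u c := by
  by_contra h
  exact hfree.false (G.nonempty_diamondGraph_embedding huv huw hvw hvc hwc h huc).some

end SimpleGraph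

namespace IsSTCLabeling

variable {V : Type*} {G : SimpleGraph V} {S : Set (Sym2 V)}

lemma adj (hS : IsSTCLabeling G S) {u v : V} (h : s(u, v) ∈ S) : G.Adj u v :=
  G.mem_edgeSet.mp (hS.1 h)

lemma insert_of_adj {u w : V} (hS : IsSTCLabeling G S) (huw : G.Adj u w)
    (hu : ∀ c, s(u, c) ∈ S → c ≠ w → G.Adj w c) (hw : ∀ c, s(w, c) ∈ S → c ≠ u → G.Adj u c) :
    IsSTCLabeling G (insert s(u, w) S) := by
  have new_first : ∀ a b c, s(a, b) = s(u, w) → s(b, c) ∈ S → a ≠ c → G.Adj a c := by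
    intro a b c hab hbc hac
    rcases Sym2.eq_iff.mp hab with ⟨rfl, rfl⟩ | ⟨rfl, rfl⟩
    exacts [hw c hbc hac.symm, hu c hbc hac.symm]
  refine ⟨Set.insert_subset (G.mem_edgeSet.mpr huw) hS.1, ?_⟩
  rintro a b c (hab | hab) (hbc | hbc) hac
  · rw [← hbc, Sym2.eq_swap, Sym2.congr_right] at hab
    exact absurd hab hac
  · exact new_first a b c hab hbc hac
  · rw [Sym2.eq_swap] at hab hbc
    exact (new_first c b a hbc hab hac.symm).symm
  · exact hS.2 a b c hab hbc hac

lemma insert_of_diamondFree (hfree : IsEmpty (diamondGraph ↪g G)) (hS : IsSTCLabeling G S)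
    {u v w : V} (huv : s(u, v) ∈ S) (hvw : s(v, w) ∈ S) (huw : u ≠ w) :
    IsSTCLabeling G (insert s(u, w) S) := by
  have apex : ∀ {u v w : V}, s(u, v) ∈ S → s(v, w) ∈ S → u ≠ w →
      ∀ c, s(w, c) ∈ S → c ≠ u → G.Adj u c := by
    intro u v w huv hvw huw c hwc hcu
    obtain rfl | hcv := eq_or_ne c v
    · exact hS.adj huv
    have hcv : G.Adj c v := hS.2 c w v (Sym2.eq_swap ▸ hwc) (Sym2.eq_swap ▸ hvw) hcv
    exact SimpleGraph.adj_of_triangles_of_diamondFree hfree (hS.adj huv) (hS.2 u v w huv hvw huw)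
      (hS.adj hvw) hcv.symm (hS.adj hwc) hcu.symm
  exact hS.insert_of_adj (hS.2 u v w huv hvw huw)
    (apex (Sym2.eq_swap ▸ hvw) (Sym2.eq_swap ▸ huv) huw.symm) (apex huv hvw huw)

end IsSTCLabeling

lemma exists_optimal_STCLabeling {V : Type*} [Finite V] (G : SimpleGraph V) :
    ∃ S, IsSTCLabeling G S ∧ ∀ S', IsSTCLabeling G S' → S'.ncard ≤ S.ncard := by
  have hempty : IsSTCLabeling G ∅ := ⟨Set.empty_subset _, by simp⟩
  obtain ⟨S, hS, hmax⟩ := Set.exists_max_image {S | IsSTCLabeling G S} Set.ncard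
    (Set.toFinite _) ⟨∅, hempty⟩
  exact ⟨S, hS, hmax⟩

/-- In a diamond-free graph there is an optimal STC-labeling whose strong edges form
a cluster graph (every connected component of the spanning subgraph of strong edges
is a clique, i.e. the strong adjacency is transitive). -/
theorem diamond_free_optimal_cluster_labeling {V : Type*} [Fintype V]
    (G : SimpleGraph V) (hfree : IsEmpty (diamondGraph ↪g G)) :
    ∃ S : Set (Sym2 V), IsSTCLabeling G S ∧
      (∀ S' : Set (Sym2 V), IsSTCLabeling G S' → S'.ncard ≤ S.ncard) ∧
      (∀ u v w : V, s(u, v) ∈ S → s(v, w) ∈ S → u ≠ w → s(u, w) ∈ S) := by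
  obtain ⟨S, hS, hopt⟩ := exists_optimal_STCLabeling G
  refine ⟨S, hS, hopt, fun u v w huv hvw huw => ?_⟩
  by_contra hnew
  have hlarger := hopt _ (hS.insert_of_diamondFree hfree huv hvw huw)
  rw [Set.ncard_insert_of_notMem hnew (Set.toFinite S)] at hlarger
  omega
end

section
/- Let G be the complement of the cycle C7 on seven vertices. Then G admits an STC-labeling with at least 7 strong edges, but every cluster subgraph of G (spanning subgraph of G that is a disjoint union of cliques) has at most 6 edges. In particular, no optimal STC-labeling of G is a cluster labeling. -/
/-- The cycle `C₇` on the vertices `ZMod 7`: `i` and `j` are adjacent iff they are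
consecutive. -/
def cycleSeven : SimpleGraph (ZMod 7) :=
  SimpleGraph.fromRel (fun i j => j - i = 1)

/-- The complement of `C₇`. -/
def complC7 : SimpleGraph (ZMod 7) := cycleSevenᶜ

/-!
The complement of `C₇` is `K₄`-free, because four vertices of a `7`-cycle always include two
consecutive ones. In a `K₄`-free cluster graph every closed neighbourhood is a clique of size at
most `3`, so all degrees are at most `2` and there are at most `7` edges on `7` vertices; equality
would make every cluster a triangle, which is impossible as `3 ∤ 7`. On the other hand, the seven
chords `{i, i + 2}` are strong edges of an STC-labeling: two of them sharing a vertex have their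
other endpoints at distance `3` on the cycle, hence adjacent in the complement.
-/

open Finset

namespace SimpleGraph

variable {V : Type*} {G : SimpleGraph V}

variable (G) in
def IsClusterGraph : Prop :=
  ∀ ⦃u v w : V⦄, G.Adj u v → G.Adj v w → u ≠ w → G.Adj u w

theorem isClusterGraph_fromEdgeSet {S : Set (Sym2 V)}
    (hS : ∀ u v w : V, s(u, v) ∈ S → s(v, w) ∈ S → u ≠ w → s(u, w) ∈ S) :
    (fromEdgeSet S).IsClusterGraph :=
  fun u v w huv hvw huw => ⟨hS u v w huv.1 hvw.1 huw, huw⟩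

theorem edgeSet_fromEdgeSet_of_subset {S : Set (Sym2 V)} (hS : S ⊆ G.edgeSet) :
    (fromEdgeSet S).edgeSet = S := by
  rw [edgeSet_fromEdgeSet]
  exact sdiff_eq_left.mpr <| Set.disjoint_left.mpr fun _ he => G.not_isDiag_of_mem_edgeSet (hS he)

namespace IsClusterGraph

theorem isClique_insert_neighborSet (hG : G.IsClusterGraph) (v : V) :
    G.IsClique (insert v (G.neighborSet v)) :=
  IsClique.insert (fun _ hu _ hw huw => hG (G.adj_symm hu) hw huw) fun _ hu _ => hu

variable [Fintype V] [DecidableRel G.Adj]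

theorem degree_lt (hG : G.IsClusterGraph) {n : ℕ} (hfree : G.CliqueFree (n + 1)) (v : V) :
    G.degree v < n := by
  classical
  by_contra! h
  obtain ⟨t, htv, htn⟩ := exists_subset_card_eq h
  refine hfree (insert v t) ⟨(hG.isClique_insert_neighborSet v).subset ?_, ?_⟩
  · rw [coe_insert, ← coe_neighborFinset]
    exact Set.insert_subset_insert (coe_subset.mpr htv)
  · rw [card_insert_of_notMem fun hv => G.loopless.irrefl v ((mem_neighborFinset ..).mp (htv hv)),
      htn]

variable [DecidableEq V]

theorem insert_neighborFinset_eq_iff (hG : G.IsClusterGraph) (u v : V) :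
    insert u (G.neighborFinset u) = insert v (G.neighborFinset v) ↔ u = v ∨ G.Adj u v := by
  constructor
  · intro h
    have hu : u ∈ insert v (G.neighborFinset v) := h ▸ mem_insert_self u _
    simpa [eq_comm, G.adj_comm] using hu
  · rintro (rfl | huv)
    · rfl
    ext w
    simp only [mem_insert, mem_neighborFinset]
    unfold IsClusterGraph at hG
    grind [G.adj_symm, G.ne_of_adj]

/-- The closed neighbourhoods of a regular cluster graph partition its vertices into cliques
of size `d + 1`. -/
theorem dvd_card_of_forall_degree_eq (hG : G.IsClusterGraph) {d : ℕ}
    (hd : ∀ v, G.degree v = d) : d + 1 ∣ Fintype.card V := by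
  set cls : V → Finset V := fun v => insert v (G.neighborFinset v)
  have hfiber : ∀ c ∈ univ.image cls, #{u | cls u = c} = d + 1 := by
    simp only [mem_image, mem_univ, true_and, forall_exists_index, forall_apply_eq_imp_iff]
    intro v
    have hclass : ({u | cls u = cls v} : Finset V) = cls v := by
      ext u
      simp [cls, hG.insert_neighborFinset_eq_iff, G.adj_comm]
    rw [hclass, card_insert_of_notMem (by simp), card_neighborFinset_eq_degree, hd]
  rw [← card_univ, card_eq_sum_card_fiberwise fun v _ => mem_image_of_mem cls (mem_univ v),
    sum_const_nat hfiber]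
  exact dvd_mul_left _ _

theorem two_mul_card_edgeFinset_lt (hG : G.IsClusterGraph) {d : ℕ}
    (hfree : G.CliqueFree (d + 2)) (hV : ¬ d + 1 ∣ Fintype.card V) :
    2 * #G.edgeFinset < d * Fintype.card V := by
  have hdeg : ∀ v ∈ univ, G.degree v ≤ d := fun v _ => Nat.lt_succ_iff.mp (hG.degree_lt hfree v)
  have hsum : ∑ _v : V, d = d * Fintype.card V := by
    rw [sum_const, card_univ, smul_eq_mul, mul_comm]
  rw [← sum_degrees_eq_twice_card_edges, ← hsum]
  refine lt_of_le_of_ne (sum_le_sum hdeg) fun heq => hV ?_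
  exact hG.dvd_card_of_forall_degree_eq fun v => (sum_eq_sum_iff_of_le hdeg).mp heq v (mem_univ v)

end IsClusterGraph

theorem two_mul_ncard_lt_of_isClusterGraph_fromEdgeSet [Fintype V] {S : Set (Sym2 V)}
    (hSG : S ⊆ G.edgeSet) (hS : (fromEdgeSet S).IsClusterGraph) {d : ℕ}
    (hfree : G.CliqueFree (d + 2)) (hV : ¬ d + 1 ∣ Fintype.card V) :
    2 * S.ncard < d * Fintype.card V := by
  classical
  have hle : fromEdgeSet S ≤ G := fromEdgeSet_edgeSet (G := G) ▸ fromEdgeSet_mono hSG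
  convert hS.two_mul_card_edgeFinset_lt (hfree.anti hle) hV using 2
  rw [← Set.ncard_coe_finset, coe_edgeFinset, edgeSet_fromEdgeSet_of_subset hSG]

end SimpleGraph

instance : DecidableRel complC7.Adj := fun u v => by
  unfold complC7 cycleSeven
  rw [SimpleGraph.compl_adj, SimpleGraph.fromRel_adj]
  infer_instance

theorem complC7_cliqueFree_four : complC7.CliqueFree 4 :=
  SimpleGraph.cliqueFinset_eq_empty_iff.mp (by decide)

theorem isSTCLabeling_complC7_range_add_two :
    IsSTCLabeling complC7 (Set.range fun i : ZMod 7 => s(i, i + 2)) := by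
  refine ⟨?_, ?_⟩
  · rintro _ ⟨i, rfl⟩
    revert i
    decide
  · simp only [Set.mem_range]
    decide

theorem ncard_range_add_two : (Set.range fun i : ZMod 7 => s(i, i + 2)).ncard = 7 :=
  (Set.ncard_range_of_injective (f := fun i : ZMod 7 => s(i, i + 2)) (by decide)).trans
    (Nat.card_zmod 7)

/-- The complement of `C₇` has an STC-labeling with at least `7` strong edges, but
every cluster subgraph of it has at most `6` edges; in particular no optimal
STC-labeling of it is a cluster labeling. -/
theorem complC7_stc_beats_cluster_deletion :
    (∃ S : Set (Sym2 (ZMod 7)), IsSTCLabeling complC7 S ∧ 7 ≤ S.ncard) ∧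
    (∀ S : Set (Sym2 (ZMod 7)), S ⊆ complC7.edgeSet →
      (∀ u v w : ZMod 7, s(u, v) ∈ S → s(v, w) ∈ S → u ≠ w → s(u, w) ∈ S) →
      S.ncard ≤ 6) ∧
    (∀ S : Set (Sym2 (ZMod 7)), IsSTCLabeling complC7 S →
      (∀ S' : Set (Sym2 (ZMod 7)), IsSTCLabeling complC7 S' → S'.ncard ≤ S.ncard) →
      ¬ (∀ u v w : ZMod 7, s(u, v) ∈ S → s(v, w) ∈ S → u ≠ w → s(u, w) ∈ S)) := by
  have hcluster : ∀ S : Set (Sym2 (ZMod 7)), S ⊆ complC7.edgeSet →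
      (∀ u v w : ZMod 7, s(u, v) ∈ S → s(v, w) ∈ S → u ≠ w → s(u, w) ∈ S) →
      S.ncard ≤ 6 := by
    intro S hSG hS
    have h := SimpleGraph.two_mul_ncard_lt_of_isClusterGraph_fromEdgeSet hSG
      (SimpleGraph.isClusterGraph_fromEdgeSet hS) complC7_cliqueFree_four (d := 2) (by decide)
    rw [ZMod.card] at h
    omega
  have hstc : ∃ S : Set (Sym2 (ZMod 7)), IsSTCLabeling complC7 S ∧ 7 ≤ S.ncard :=
    ⟨_, isSTCLabeling_complC7_range_add_two, ncard_range_add_two.ge⟩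
  refine ⟨hstc, hcluster, fun S hS hopt hS_cluster => ?_⟩
  obtain ⟨S', hS', hS'_card⟩ := hstc
  have := hopt S' hS'
  have := hcluster S hS.1 hS_cluster
  omega
end

section
/- Let G = (V,E) be a finite simple graph with n = |V| and let G' be constructed from G as follows: add three sets K_1, K_2, K_3, each consisting of n³ new vertices v_{1,i}, …, v_{n³,i} for i ∈ {1,2,3}; add all edges inside each K_i, all edges between every vertex of K_1 ∪ K_2 ∪ K_3 and every vertex of V, and all edges {v_{c,i}, v_{d,j}} with i ≠ j and c ≠ d. Then V can be partitioned into at most three cliques of G if and only if G' admits an STC-labeling with at least 3·C(n³,2) + n⁴ strong edges, where C(n³,2) = n³(n³−1)/2. -/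
/-- The graph `G'` of the 3-clique-cover reduction: to `G` we add three cliques
`K_1, K_2, K_3`, each on `N` new vertices `v_{c,i} = (i, c)`; every new vertex is
adjacent to every vertex of `V`, and two new vertices `(i, c)` and `(j, d)` are
adjacent iff `c ≠ d` (this realizes all edges inside each `K_i` and the edges
`{v_{c,i}, v_{d,j}}` with `i ≠ j` and `c ≠ d`). -/
def tccGraph {V : Type*} (G : SimpleGraph V) (N : ℕ) :
    SimpleGraph (V ⊕ (Fin 3 × Fin N)) :=
  SimpleGraph.fromRel (fun a b =>
    match a, b with
    | Sum.inl u, Sum.inl v => G.Adj u v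
    | Sum.inl _, Sum.inr _ => True
    | Sum.inr _, Sum.inl _ => True
    | Sum.inr p, Sum.inr q => p.2 ≠ q.2)

open SimpleGraph Finset Sum

def IsSTCSubgraph {W : Type*} (H G : SimpleGraph W) : Prop :=
  H ≤ G ∧ ∀ ⦃a b c⦄, H.Adj a b → H.Adj b c → a ≠ c → G.Adj a c

lemma isSTCLabeling_iff {W : Type*} {G : SimpleGraph W} {S : Set (Sym2 W)} :
    IsSTCLabeling G S ↔ ∃ H, IsSTCSubgraph H G ∧ H.edgeSet = S := by
  constructor
  · rintro ⟨hsub, hwedge⟩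
    have hS : (fromEdgeSet S).edgeSet = S := by
      rw [edgeSet_fromEdgeSet, sdiff_eq_left, Set.disjoint_left]
      exact fun e he => G.not_isDiag_of_mem_edgeSet (hsub he)
    refine ⟨fromEdgeSet S, ⟨fun a b hab => ?_, fun a b c hab hbc hac => ?_⟩, hS⟩
    · exact hsub ((fromEdgeSet_adj S).mp hab).1
    · exact hwedge a b c ((fromEdgeSet_adj S).mp hab).1 ((fromEdgeSet_adj S).mp hbc).1 hac
  · rintro ⟨H, ⟨hle, hwedge⟩, rfl⟩
    exact ⟨edgeSet_mono hle, fun a b c hab hbc => hwedge hab hbc⟩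

lemma two_mul_card_edgeFinset_le_of_degree_le {W : Type*} [Fintype W] (H : SimpleGraph W)
    [DecidableRel H.Adj] {d : ℕ} (h : ∀ v, H.degree v ≤ d) :
    2 * #H.edgeFinset ≤ Fintype.card W * d := by
  rw [← sum_degrees_eq_twice_card_edges, ← smul_eq_mul, ← card_univ]
  exact sum_le_card_nsmul _ _ _ fun v _ => h v

lemma card_edgeFinset_le_comap_inr_add_sum_degree_inl {α β : Type*} [Fintype α] [Fintype β]
    (H : SimpleGraph (α ⊕ β)) [DecidableRel H.Adj] :
    #H.edgeFinset ≤ #(H.comap inr).edgeFinset + ∑ a, H.degree (inl a) := by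
  classical
  set inside := (H.comap inr).edgeFinset.image (Sym2.map (inr : β → α ⊕ β))
  set touching := univ.biUnion fun a => H.incidenceFinset (inl a)
  have hcover : H.edgeFinset ⊆ inside ∪ touching := by
    intro e he
    induction e using Sym2.ind with | h x y => ?_
    rw [mem_edgeFinset, mem_edgeSet] at he
    rcases x with a | p
    · exact mem_union_right _ <|
        mem_biUnion.mpr ⟨a, mem_univ _, by simpa [incidenceSet] using he⟩
    rcases y with b | q
    · exact mem_union_right _ <|
        mem_biUnion.mpr ⟨b, mem_univ _, by simpa [incidenceSet] using he⟩
    exact mem_union_left _ (mem_image.mpr ⟨s(p, q), by simpa using he, rfl⟩)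
  calc #H.edgeFinset ≤ #inside + #touching := (card_le_card hcover).trans (card_union_le _ _)
    _ ≤ #(H.comap inr).edgeFinset + ∑ a, H.degree (inl a) := by
        gcongr
        · exact card_image_le
        · exact card_biUnion_le.trans_eq (by simp [card_incidenceFinset_eq_degree])

lemma exists_forall_mem_of_card_mul_lt {ι α : Type*} [Fintype ι] [Fintype α] [DecidableEq α]
    (M : ι → Finset α)
    (h : Fintype.card ι * Fintype.card α < Fintype.card α + ∑ i, #(M i)) :
    ∃ a, ∀ i, a ∈ M i := by
  by_contra! hmiss
  have hcover : (univ : Finset α) ⊆ univ.biUnion fun i => (M i)ᶜ := fun a _ => by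
    obtain ⟨i, hi⟩ := hmiss a
    exact mem_biUnion.mpr ⟨i, mem_univ _, mem_compl.mpr hi⟩
  have hsum : ∑ i, #(M i)ᶜ + ∑ i, #(M i) = Fintype.card ι * Fintype.card α := by
    simp [← sum_add_distrib, card_compl_add_card]
  have := (card_le_card hcover).trans card_biUnion_le
  rw [card_univ] at this
  omega

lemma exists_cliqueCover_iff_colorable_compl {V : Type*} {G : SimpleGraph V} :
    (∃ V1 V2 V3 : Set V, V1 ∪ V2 ∪ V3 = Set.univ ∧
      Disjoint V1 V2 ∧ Disjoint V1 V3 ∧ Disjoint V2 V3 ∧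
      G.IsClique V1 ∧ G.IsClique V2 ∧ G.IsClique V3) ↔ Gᶜ.Colorable 3 := by
  classical
  constructor
  · rintro ⟨V1, V2, V3, hcover, -, -, -, h1, h2, h3⟩
    refine ⟨.mk (fun u => if u ∈ V1 then 0 else if u ∈ V2 then 1 else 2) ?_⟩
    rintro u v ⟨huv, hnadj⟩ hcol
    have hu : u ∈ V1 ∪ V2 ∪ V3 := hcover ▸ Set.mem_univ u
    have hv : v ∈ V1 ∪ V2 ∪ V3 := hcover ▸ Set.mem_univ v
    simp only [Set.mem_union] at hu hv
    split_ifs at hcol <;> simp_all [isClique_iff, Set.Pairwise]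
  · rintro ⟨C⟩
    have hclique (i : Fin 3) : G.IsClique (C.colorClass i) := by
      simpa using C.isIndepSet_colorClass i
    refine ⟨C.colorClass 0, C.colorClass 1, C.colorClass 2, ?_, ?_, ?_, ?_,
      hclique 0, hclique 1, hclique 2⟩
    · ext u
      simp only [Coloring.colorClass, Set.mem_union, Set.mem_univ, iff_true]
      exact (by decide : ∀ i : Fin 3, (i = 0 ∨ i = 1) ∨ i = 2) (C u)
    all_goals
      rw [Set.disjoint_left]
      intro u hu hu'
      simp_all [Coloring.colorClass]

section Reduction

variable {V : Type*} {G : SimpleGraph V} {N : ℕ}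

@[simp]
lemma tccGraph_adj_inl_inl {u v : V} : (tccGraph G N).Adj (inl u) (inl v) ↔ G.Adj u v := by
  simp +contextual [tccGraph, G.ne_of_adj, G.adj_comm]

@[simp]
lemma tccGraph_adj_inl_inr {u : V} {p : Fin 3 × Fin N} : (tccGraph G N).Adj (inl u) (inr p) := by
  simp [tccGraph]

@[simp]
lemma tccGraph_adj_inr_inl {u : V} {p : Fin 3 × Fin N} : (tccGraph G N).Adj (inr p) (inl u) := by
  simp [tccGraph]

@[simp]
lemma tccGraph_adj_inr_inr {p q : Fin 3 × Fin N} :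
    (tccGraph G N).Adj (inr p) (inr q) ↔ p.2 ≠ q.2 := by
  simp +contextual [tccGraph, eq_comm, Prod.ext_iff]

lemma IsSTCSubgraph.injOn_snd {H : SimpleGraph (V ⊕ Fin 3 × Fin N)}
    (hH : IsSTCSubgraph H (tccGraph G N)) (a : V ⊕ Fin 3 × Fin N) :
    Set.InjOn Prod.snd {p | H.Adj a (inr p)} := by
  intro p hp q hq hpq
  by_contra hne
  exact tccGraph_adj_inr_inr.mp (hH.2 hp.symm hq (by simpa using hne)) hpq

def coverStrongGraph (C : V → Fin 3) (N : ℕ) : SimpleGraph (V ⊕ Fin 3 × Fin N) where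
  Adj a b := match a, b with
    | inl _, inl _ => False
    | inl u, inr p => C u = p.1
    | inr p, inl u => C u = p.1
    | inr p, inr q => p.1 = q.1 ∧ p.2 ≠ q.2
  symm := ⟨by rintro (u | p) (v | q) <;> simp +contextual [eq_comm]⟩
  loopless := ⟨by rintro (u | p) <;> simp⟩

lemma isSTCSubgraph_coverStrongGraph (C : Gᶜ.Coloring (Fin 3)) :
    IsSTCSubgraph (coverStrongGraph C N) (tccGraph G N) := by
  refine ⟨?_, ?_⟩
  · rintro (u | p) (v | q) <;> simp +contextual [coverStrongGraph]
  · rintro (u | p) (v | q) (w | r) <;>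
      simp +contextual [coverStrongGraph, Prod.ext_iff]
    exact fun hu hw huw => by_contra fun hnadj => C.valid ⟨huw, hnadj⟩ (hu.trans hw.symm)

lemma card_le_ncard_edgeSet_coverStrongGraph [Fintype V] (C : V → Fin 3) :
    3 * N.choose 2 + Fintype.card V * N ≤ (coverStrongGraph C N).edgeSet.ncard := by
  let inK (x : Fin 3 × {e : Sym2 (Fin N) // ¬e.IsDiag}) : Sym2 (V ⊕ Fin 3 × Fin N) :=
    x.2.1.map fun c => inr (x.1, c)
  let toK (x : V × Fin N) : Sym2 (V ⊕ Fin 3 × Fin N) := s(inl x.1, inr (C x.1, x.2))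
  have hinj : Function.Injective (Sum.elim inK toK) := by
    refine Function.Injective.sumElim ?_ ?_ ?_
    · rintro ⟨i, ⟨e, he⟩⟩ ⟨j, ⟨e', he'⟩⟩ h
      induction e using Sym2.ind
      induction e' using Sym2.ind
      simp_all [inK]
      tauto
    · rintro ⟨u, c⟩ ⟨v, d⟩ h
      simp_all [toK]
    · rintro ⟨i, ⟨e, he⟩⟩ ⟨u, c⟩
      induction e using Sym2.ind
      simp [inK, toK]
  have hrange : Set.range (Sum.elim inK toK) ⊆ (coverStrongGraph C N).edgeSet := by
    rintro _ ⟨⟨i, ⟨e, he⟩⟩ | ⟨u, c⟩, rfl⟩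
    · induction e using Sym2.ind
      simpa [inK, coverStrongGraph] using he
    · simp [toK, coverStrongGraph]
  calc 3 * N.choose 2 + Fintype.card V * N
      = Nat.card ((Fin 3 × {e : Sym2 (Fin N) // ¬e.IsDiag}) ⊕ (V × Fin N)) := by
        rw [Nat.card_eq_fintype_card, Fintype.card_sum, Fintype.card_prod, Fintype.card_prod,
          Sym2.card_subtype_not_diag, Fintype.card_fin, Fintype.card_fin]
    _ = (Set.range (Sum.elim inK toK)).ncard := (Set.ncard_range_of_injective hinj).symm
    _ ≤ _ := Set.ncard_le_ncard hrange

variable {H : SimpleGraph (V ⊕ Fin 3 × Fin N)} [DecidableRel H.Adj]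

variable (H) in
def strongColumns (u : V) : Finset (Fin N) := {c | ∃ i, H.Adj (inl u) (inr (i, c))}

lemma IsSTCSubgraph.degree_comap_inr_le (hH : IsSTCSubgraph H (tccGraph G N))
    (p : Fin 3 × Fin N) : (H.comap inr).degree p ≤ N - 1 := by
  rw [← card_neighborFinset_eq_degree]
  calc #((H.comap inr).neighborFinset p) ≤ #(univ.erase p.2) := by
        refine card_le_card_of_injOn Prod.snd (fun q hq => ?_) ((hH.injOn_snd (inr p)).mono ?_)
        · simpa [eq_comm] using tccGraph_adj_inr_inr.mp (hH.1 (by simpa using hq))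
        · intro q hq; simpa using hq
    _ = N - 1 := by simp

lemma IsSTCSubgraph.degree_inl_le [Fintype V] (hH : IsSTCSubgraph H (tccGraph G N)) (u : V) :
    H.degree (inl u) ≤ Fintype.card V - 1 + #(strongColumns H u) := by
  classical
  rw [← card_neighborFinset_eq_degree, ← card_toLeft_add_card_toRight]
  gcongr
  · calc #(H.neighborFinset (inl u)).toLeft ≤ #(univ.erase u) :=
          card_le_card fun v hv => mem_erase.mpr ⟨fun h => by simp_all, mem_univ v⟩
      _ = Fintype.card V - 1 := by simp
  · refine card_le_card_of_injOn Prod.snd (fun q hq => ?_) ((hH.injOn_snd (inl u)).mono ?_)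
    · rw [mem_coe, mem_toRight, mem_neighborFinset] at hq
      exact mem_filter.mpr ⟨mem_univ _, q.1, hq⟩
    · intro q hq; simpa using hq

lemma IsSTCSubgraph.exists_forall_mem_strongColumns [Fintype V]
    (hH : IsSTCSubgraph H (tccGraph G N))
    (hN : Fintype.card V * (Fintype.card V - 1) < N)
    (hcard : 3 * N.choose 2 + Fintype.card V * N ≤ #H.edgeFinset) :
    ∃ c, ∀ u, c ∈ strongColumns H u := by
  apply exists_forall_mem_of_card_mul_lt
  have hK : 2 * #(H.comap inr).edgeFinset ≤ 3 * N * (N - 1) := by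
    simpa using two_mul_card_edgeFinset_le_of_degree_le _ hH.degree_comap_inr_le
  have hV : ∑ u, H.degree (inl u) ≤
      Fintype.card V * (Fintype.card V - 1) + ∑ u, #(strongColumns H u) := by
    calc ∑ u, H.degree (inl u) ≤ ∑ u, (Fintype.card V - 1 + #(strongColumns H u)) :=
          sum_le_sum fun u _ => hH.degree_inl_le u
      _ = _ := by simp [sum_add_distrib]
  have hchoose : 2 * N.choose 2 = N * (N - 1) := by
    rw [Nat.choose_two_right, Nat.mul_div_cancel' (Nat.even_mul_pred_self N).two_dvd]
  have := card_edgeFinset_le_comap_inr_add_sum_degree_inl H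
  rw [Fintype.card_fin]
  linarith

lemma IsSTCSubgraph.colorable_compl (hH : IsSTCSubgraph H (tccGraph G N)) (c : Fin N)
    (hc : ∀ u, c ∈ strongColumns H u) : Gᶜ.Colorable 3 := by
  choose col hcol using fun u => by simpa [strongColumns] using hc u
  refine ⟨.mk col ?_⟩
  rintro u v ⟨huv, hnadj⟩ heq
  have hv : H.Adj (inr (col u, c)) (inl v) := heq ▸ (hcol v).symm
  exact hnadj (by simpa using hH.2 (hcol u) hv (by simpa using huv))

end Reduction

/-- The vertex set of `G` can be partitioned into at most three cliques iff the
graph `G'` of the reduction (with `N = n³`, `n = |V|`) admits an STC-labeling with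
at least `3·C(n³,2) + n⁴` strong edges. -/
theorem three_clique_cover_iff_stc {V : Type*} [Fintype V] (G : SimpleGraph V) :
    (∃ V1 V2 V3 : Set V, V1 ∪ V2 ∪ V3 = Set.univ ∧
      Disjoint V1 V2 ∧ Disjoint V1 V3 ∧ Disjoint V2 V3 ∧
      G.IsClique V1 ∧ G.IsClique V2 ∧ G.IsClique V3) ↔
    (∃ S : Set (Sym2 (V ⊕ (Fin 3 × Fin ((Fintype.card V) ^ 3)))),
      IsSTCLabeling (tccGraph G ((Fintype.card V) ^ 3)) S ∧
      3 * ((Fintype.card V) ^ 3).choose 2 + (Fintype.card V) ^ 4 ≤ S.ncard) := by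
  classical
  set n := Fintype.card V
  rw [exists_cliqueCover_iff_colorable_compl, show n ^ 4 = n * n ^ 3 by ring]
  constructor
  · rintro ⟨C⟩
    exact ⟨_, isSTCLabeling_iff.mpr ⟨_, isSTCSubgraph_coverStrongGraph C, rfl⟩,
      card_le_ncard_edgeSet_coverStrongGraph C⟩
  · rintro ⟨S, hS, hcard⟩
    obtain ⟨H, hH, rfl⟩ := isSTCLabeling_iff.mp hS
    rcases isEmpty_or_nonempty V with hV | hV
    · exact .of_isEmpty 3
    have hn : n * (n - 1) < n ^ 3 := by
      have : 0 < n := Fintype.card_pos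
      calc n * (n - 1) < n * n := by gcongr; omega
        _ ≤ n ^ 3 := by nlinarith
    rw [← coe_edgeFinset, Set.ncard_coe_finset] at hcard
    obtain ⟨c, hc⟩ := hH.exists_forall_mem_strongColumns hn hcard
    exact hH.colorable_compl c hc
end
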